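/- arXiv:1411.1140 — 9 statements merged into one kernel-verified Lean document; each statement's English description precedes it below -/
import Mathlib

section
/- Let G be the group given by the presentation with three generators a, b, c and three relators a·a·b·a·b·a (that is, a²(ba)²), a·b·c·b·c·b (that is, ab(cb)²), and b·c·c·c·c·c (that is, bc(cc)²). Then G is isomorphic to the cyclic group ℤ/42ℤ. -/
def fakePlaneRelators : Set (FreeGroup (Fin 3)) :=
  { FreeGroup.of 0 * FreeGroup.of 0 * FreeGroup.of 1 * FreeGroup.of 0 *
      FreeGroup.of 1 * FreeGroup.of 0,
    FreeGroup.of 0 * FreeGroup.of 1 * FreeGroup.of 2 * FreeGroup.of 1 *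
      FreeGroup.of 2 * FreeGroup.of 1,
    FreeGroup.of 1 * FreeGroup.of 2 * FreeGroup.of 2 * FreeGroup.of 2 *
      FreeGroup.of 2 * FreeGroup.of 2 }

namespace FPR
abbrev G := PresentedGroup fakePlaneRelators
def a : G := PresentedGroup.of 0
def b : G := PresentedGroup.of 1
def c : G := PresentedGroup.of 2

theorem hrel : ∀ r ∈ fakePlaneRelators, PresentedGroup.mk fakePlaneRelators r = 1 :=
  fun _ hr => (QuotientGroup.eq_one_iff _).mpr (Subgroup.subset_normalClosure hr)

theorem h1 : a * a * b * a * b * a = 1 := by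
  have := hrel _ (show _ ∈ fakePlaneRelators from Or.inl rfl)
  simp only [map_mul] at this; exact this

theorem h2 : a * b * c * b * c * b = 1 := by
  have := hrel _ (show _ ∈ fakePlaneRelators from Or.inr (Or.inl rfl))
  simp only [map_mul] at this; exact this

theorem h3 : b * c * c * c * c * c = 1 := by
  have := hrel _ (show _ ∈ fakePlaneRelators from Or.inr (Or.inr rfl))
  simp only [map_mul] at this; exact this

theorem hb : b = c ^ (-5 : ℤ) := by
  have h : b * (c * c * c * c * c) = 1 := by rw [← h3]; group
  rw [eq_inv_of_mul_eq_one_left h]; group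

theorem ha : a = c ^ (13 : ℤ) := by
  have h : a * (b * c * b * c * b) = 1 := by rw [← h2]; group
  rw [eq_inv_of_mul_eq_one_left h, hb]; group

theorem hc : c ^ (42 : ℤ) = 1 := by
  calc c ^ (42 : ℤ) = a * a * b * a * b * a := by rw [ha, hb]; group
  _ = 1 := h1

def f : Fin 3 → Multiplicative (ZMod 42) := fun i =>
  Multiplicative.ofAdd (![13, -5, 1] i : ZMod 42)

theorem hf : ∀ r ∈ fakePlaneRelators, FreeGroup.lift f r = 1 := by
  rintro r (rfl | rfl | rfl) <;> simp only [map_mul, FreeGroup.lift_apply_of, f] <;> decide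

def phi : G →* Multiplicative (ZMod 42) := PresentedGroup.toGroup hf

theorem hc0 : (42 : ℤ) • Additive.ofMul c = 0 := by
  rw [← ofMul_zpow, hc]; rfl

def psi : Multiplicative (ZMod 42) →* G :=
  AddMonoidHom.toMultiplicativeLeft (ZMod.lift 42 ⟨zmultiplesHom (Additive G) (Additive.ofMul c), hc0⟩)

theorem psi_apply (n : ℤ) : psi (Multiplicative.ofAdd ((n : ZMod 42))) = c ^ n := by
  simp only [psi, AddMonoidHom.coe_toMultiplicativeLeft, Function.comp_apply, toAdd_ofAdd,
    ZMod.lift_coe, zmultiplesHom_apply, zsmul_eq_mul]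
  rfl

theorem phi_c : phi c = Multiplicative.ofAdd ((1 : ℤ) : ZMod 42) := by
  simp only [phi, c, PresentedGroup.toGroup.of, f]
  decide

theorem left_inv : psi.comp phi = MonoidHom.id G := by
  apply PresentedGroup.ext
  intro x
  fin_cases x
  · show psi (phi a) = a
    rw [show phi a = Multiplicative.ofAdd (((13:ℤ) : ZMod 42)) by
      simp only [phi, a, PresentedGroup.toGroup.of, f]; decide, psi_apply, ha]
  · show psi (phi b) = b
    rw [show phi b = Multiplicative.ofAdd (((-5:ℤ) : ZMod 42)) by
      simp only [phi, b, PresentedGroup.toGroup.of, f]; decide, psi_apply, hb]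
  · show psi (phi c) = c
    rw [phi_c, psi_apply, zpow_one]

theorem right_inv : phi.comp psi = MonoidHom.id (Multiplicative (ZMod 42)) := by
  refine MonoidHom.ext fun x => ?_
  obtain ⟨n, hn⟩ := ZMod.intCast_surjective (x.toAdd)
  have hx : x = Multiplicative.ofAdd ((n : ZMod 42)) := by rw [hn]; rfl
  rw [MonoidHom.comp_apply, MonoidHom.id_apply, hx, psi_apply, map_zpow, phi_c,
    ← ofAdd_zsmul]
  congr 1
  simp

end FPR

/-- The group presented by generators `a, b, c` and relators `a²(ba)²`, `ab(cb)²`,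
`bc(cc)²` is isomorphic to the cyclic group `ℤ/42ℤ`. -/
theorem presentedGroup_iso_zmod42 :
    Nonempty (PresentedGroup fakePlaneRelators ≃* Multiplicative (ZMod 42)) :=
  ⟨MonoidHom.toMulEquiv FPR.phi FPR.psi FPR.left_inv FPR.right_inv⟩
end

section
/- Let G be any group and a, b, c ∈ G elements satisfying a²(ba)² = 1, ab(cb)² = 1, and bc(cc)² = 1. Then b = c⁻⁵, a = c¹³, and c⁴² = 1; in particular the subgroup generated by a, b, c is cyclic, generated by c, of order dividing 42. -/
/-- If elements `a, b, c` of a group satisfy `a²(ba)² = 1`, `ab(cb)² = 1` and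
`bc(cc)² = 1`, then `b = c⁻⁵`, `a = c¹³` and `c⁴² = 1`; in particular the
subgroup generated by `a, b, c` is cyclic, generated by `c`, of order dividing
`42`. -/
theorem relators_reduce_to_zmod42 {G : Type*} [Group G] (a b c : G)
    (h1 : a * a * b * a * b * a = 1)
    (h2 : a * b * c * b * c * b = 1)
    (h3 : b * c * c * c * c * c = 1) :
    b = (c ^ 5)⁻¹ ∧ a = c ^ 13 ∧ c ^ 42 = 1 ∧
      Subgroup.closure {a, b, c} = Subgroup.zpowers c ∧
      orderOf c ∣ 42 := by
  have hb : b = (c ^ 5)⁻¹ := by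
    have h3' : b * c ^ 5 = 1 := by rw [← h3]; simp [pow_succ, mul_assoc]
    exact mul_eq_one_iff_eq_inv.mp h3'
  have ha : a = c ^ 13 := by
    subst hb
    have h2' : a * ((c ^ 5)⁻¹ * c * (c ^ 5)⁻¹ * c * (c ^ 5)⁻¹) = 1 := by
      rw [← h2]; group
    have := mul_eq_one_iff_eq_inv.mp h2'
    rw [this]; group
  have hc : c ^ 42 = 1 := by
    subst hb; subst ha
    rw [← h1]; group
  refine ⟨hb, ha, hc, ?_, orderOf_dvd_of_pow_eq_one hc⟩
  apply le_antisymm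
  · rw [Subgroup.closure_le]
    intro x hx
    simp only [Set.mem_insert_iff, Set.mem_singleton_iff] at hx
    rcases hx with rfl | rfl | rfl
    · exact ⟨13, by rw [ha]; group⟩
    · exact ⟨-5, by rw [hb]; group⟩
    · exact ⟨1, by group⟩
  · rw [Subgroup.zpowers_le]
    exact Subgroup.subset_closure (by simp)
end

section
/- Let K = ℚ(√−7), let O be its ring of integers, let R = O[1/2] be the localization of O away from 2, and let θ = √−7 ∈ R. Let p be a rational prime, ε ∈ {1, −1}, and let x be a 3×3 matrix over R such that x^p = σ·I for some σ ∈ R and such that x ≡ ε·I (mod θ), i.e. every entry of x − ε·I is divisible by θ. Then x is a scalar matrix: there exists τ ∈ R with x = τ·I. -/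
open Finset

section aux
variable {S : Type*} [CommRing S]

lemma aux_unit_mul {θ a b : S} (ha : θ ∣ a - 1) (hb : θ ∣ b - 1) : θ ∣ a * b - 1 := by
  have h : a * b - 1 = (a - 1) * b + (b - 1) := by ring
  rw [h]; exact dvd_add (ha.mul_right b) hb

lemma aux_unit_pow {θ a : S} (ha : θ ∣ a - 1) (k : ℕ) : θ ∣ a ^ k - 1 := by
  have h := sub_dvd_pow_sub_pow a 1 k
  rw [one_pow] at h
  exact ha.trans h

lemma aux_cancel_unit {θ u a : S} (hu : θ ∣ u - 1) (h : θ ∣ u * a) : θ ∣ a := by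
  have he : a = u * a - (u - 1) * a := by ring
  rw [he]; exact dvd_sub h (hu.mul_right a)

end aux

lemma main_step {S : Type*} [CommRing S] [IsDomain S] (θ : S) (hθ0 : θ ≠ 0)
    (hθ2 : θ ^ 2 = -7) {p : ℕ} (hp : p.Prime) (ε : S) (hε2 : ε * ε = 1)
    (x : Matrix (Fin 3) (Fin 3) S) (σ : S)
    (hpow : x ^ p = σ • (1 : Matrix (Fin 3) (Fin 3) S))
    (n : ℕ) (hn : 1 ≤ n) (τ : S) (hτε : θ ∣ τ - ε)
    (hx : ∀ i j, θ ^ n ∣ (x - τ • (1 : Matrix (Fin 3) (Fin 3) S)) i j) :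
    ∃ τ' : S, (θ ∣ τ' - ε) ∧
      ∀ i j, θ ^ (n + 1) ∣ (x - τ' • (1 : Matrix (Fin 3) (Fin 3) S)) i j := by
  classical
  obtain ⟨r, hr⟩ : ∃ r, p = r + 2 := ⟨p - 2, by have := hp.two_le; omega⟩
  subst hr
  choose y hy using hx
  set A : Matrix (Fin 3) (Fin 3) S := x - τ • (1 : Matrix (Fin 3) (Fin 3) S) with hAdef
  set Y : Matrix (Fin 3) (Fin 3) S := Matrix.of y with hYdef
  set t : Matrix (Fin 3) (Fin 3) S := τ • (1 : Matrix (Fin 3) (Fin 3) S) with htdef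
  have hA : A = θ ^ n • Y := by
    ext i j
    simpa [hYdef, Matrix.smul_apply, smul_eq_mul] using hy i j
  have ht : ∀ k : ℕ, t ^ k = τ ^ k • (1 : Matrix (Fin 3) (Fin 3) S) := by
    intro k; rw [htdef, smul_pow, one_pow]
  have hcastM : ∀ m : ℕ, ((m : ℕ) : Matrix (Fin 3) (Fin 3) S) = (m : S) • (1 : Matrix (Fin 3) (Fin 3) S) := by
    intro m
    rw [Nat.cast_smul_eq_nsmul, nsmul_eq_mul, mul_one]
  have hAk : ∀ k : ℕ, A ^ k = θ ^ (n * k) • Y ^ k := by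
    intro k; rw [hA, smul_pow, ← pow_mul]
  have hcomm : Commute A t := by
    show A * t = t * A
    rw [htdef, Matrix.mul_smul, Matrix.smul_mul, Matrix.mul_one, Matrix.one_mul]
  have hbin := hcomm.add_pow (r + 2)
  have hxAt : A + t = x := by rw [hAdef, htdef]; exact sub_add_cancel x _
  rw [hxAt, hpow] at hbin
  rw [show r + 2 + 1 = r + 1 + 1 + 1 from rfl, Finset.sum_range_succ',
    Finset.sum_range_succ'] at hbin
  -- clean up the two low-order terms
  have hone : ∀ i j : Fin 3, (σ • (1 : Matrix (Fin 3) (Fin 3) S)) i j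
      = (∑ k ∈ range (r + 1),
          A ^ (k + 1 + 1) * t ^ (r + 2 - (k + 1 + 1)) * ((r + 2).choose (k + 1 + 1) : Matrix (Fin 3) (Fin 3) S)) i j
        + (A ^ (0 + 1) * t ^ (r + 2 - (0 + 1)) * ((r + 2).choose (0 + 1) : Matrix (Fin 3) (Fin 3) S)) i j
        + (A ^ 0 * t ^ (r + 2 - 0) * ((r + 2).choose 0 : Matrix (Fin 3) (Fin 3) S)) i j := by
    intro i j
    rw [hbin]
    rfl
  have hterm : ∀ (k : ℕ) (i j : Fin 3),
      (A ^ (k + 1 + 1) * t ^ (r + 2 - (k + 1 + 1)) * ((r + 2).choose (k + 1 + 1) : Matrix (Fin 3) (Fin 3) S)) i j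
        = θ ^ (n * (k + 2)) * (((r + 2).choose (k + 2) : S)) * τ ^ (r + 2 - (k + 1 + 1)) * ((Y ^ (k + 2)) i j) := by
    intro k i j
    rw [hAk (k + 1 + 1), hcastM, ht, Matrix.smul_mul, Matrix.mul_smul, Matrix.mul_smul,
      Matrix.mul_one, Matrix.smul_apply, Matrix.smul_apply, Matrix.smul_apply, smul_eq_mul,
      smul_eq_mul, smul_eq_mul]
    ring
  have hmid : ∀ i j : Fin 3,
      (A ^ (0 + 1) * t ^ (r + 2 - (0 + 1)) * ((r + 2).choose (0 + 1) : Matrix (Fin 3) (Fin 3) S)) i j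
        = ((r + 2 : ℕ) : S) * τ ^ (r + 2 - (0 + 1)) * (θ ^ n * y i j) := by
    intro i j
    rw [Nat.choose_one_right, pow_one, hcastM, ht, hA, Matrix.smul_mul, Matrix.mul_smul,
      Matrix.mul_smul, Matrix.mul_one, Matrix.smul_apply, Matrix.smul_apply, Matrix.smul_apply,
      smul_eq_mul, smul_eq_mul, smul_eq_mul]
    simp only [Matrix.mul_one, hYdef, Matrix.of_apply]
    ring
  have hlast : ∀ i j : Fin 3,
      (A ^ 0 * t ^ (r + 2 - 0) * ((r + 2).choose 0 : Matrix (Fin 3) (Fin 3) S)) i j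
        = τ ^ (r + 2) * (1 : Matrix (Fin 3) (Fin 3) S) i j := by
    intro i j
    rw [pow_zero, Nat.choose_zero_right, Nat.cast_one, one_mul, mul_one, Nat.sub_zero, ht,
      Matrix.smul_apply, smul_eq_mul]
  -- unified data for the two cases p = 7 / p ≠ 7
  obtain ⟨μ, π, w, hπ, hw, hC⟩ :
      ∃ (μ : ℕ) (π w : S), (((r + 2 : ℕ) : S) = θ ^ μ * π) ∧ (θ ∣ w * π - 1) ∧
        (∀ k ∈ range (r + 1),
          θ ^ (n + μ + 1) ∣ θ ^ (n * (k + 2)) * (((r + 2).choose (k + 2) : S))) := by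
    by_cases h7 : r + 2 = 7
    · have hr5 : r = 5 := by omega
      subst hr5
      refine ⟨2, -1, -1, by push_cast; linear_combination hθ2, by simp, ?_⟩
      intro k hk
      have hk5 : k ≤ 5 := by simpa using Nat.lt_succ_iff.mp (Finset.mem_range.mp hk)
      have hdvd21 : ∀ c : ℤ, θ ^ (n + 2 + 1) ∣ θ ^ (n * (k + 2)) * (θ ^ 2 * (c : S)) := by
        intro c
        have h1 : θ ^ (n + 1) ∣ θ ^ (n * (k + 2)) :=
          pow_dvd_pow θ (by nlinarith)
        have := mul_dvd_mul h1 (dvd_mul_right (θ ^ 2) ((c : S)))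
        rwa [← pow_add, show n + 1 + 2 = n + 2 + 1 from rfl] at this
      interval_cases k
      · have hcc : Nat.choose 7 2 = 21 := by decide
        have : ((Nat.choose 7 2 : ℕ) : S) = θ ^ 2 * ((-3 : ℤ) : S) := by
          rw [hcc]; push_cast; linear_combination (3 : S) * hθ2
        rw [this]; exact hdvd21 _
      · have hcc : Nat.choose 7 3 = 35 := by decide
        have : ((Nat.choose 7 3 : ℕ) : S) = θ ^ 2 * ((-5 : ℤ) : S) := by
          rw [hcc]; push_cast; linear_combination (5 : S) * hθ2
        rw [this]; exact hdvd21 _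
      · have hcc : Nat.choose 7 4 = 35 := by decide
        have : ((Nat.choose 7 4 : ℕ) : S) = θ ^ 2 * ((-5 : ℤ) : S) := by
          rw [hcc]; push_cast; linear_combination (5 : S) * hθ2
        rw [this]; exact hdvd21 _
      · have hcc : Nat.choose 7 5 = 21 := by decide
        have : ((Nat.choose 7 5 : ℕ) : S) = θ ^ 2 * ((-3 : ℤ) : S) := by
          rw [hcc]; push_cast; linear_combination (3 : S) * hθ2
        rw [this]; exact hdvd21 _
      · have hcc : Nat.choose 7 6 = 7 := by decide
        have : ((Nat.choose 7 6 : ℕ) : S) = θ ^ 2 * ((-1 : ℤ) : S) := by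
          rw [hcc]; push_cast; linear_combination (1 : S) * hθ2
        rw [this]; exact hdvd21 _
      · have hcc : Nat.choose 7 7 = 1 := by decide
        have : ((Nat.choose 7 7 : ℕ) : S) = 1 := by rw [hcc]; push_cast; ring
        rw [this, mul_one]
        exact pow_dvd_pow θ (by nlinarith)
    · -- p ≠ 7 : Bezout gives that p is invertible mod θ
      have hcop : Nat.Coprime (r + 2) 7 :=
        (Nat.coprime_primes hp (by norm_num)).mpr h7
      have hcopZ : IsCoprime ((r + 2 : ℕ) : ℤ) ((7 : ℕ) : ℤ) :=
        Nat.isCoprime_iff_coprime.mpr hcop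
      obtain ⟨a, b, hab⟩ := hcopZ
      refine ⟨0, ((r + 2 : ℕ) : S), ((a : ℤ) : S), by ring, ?_, ?_⟩
      · refine ⟨(b : ℤ) * θ, ?_⟩
        have habS : ((a : ℤ) : S) * ((r + 2 : ℕ) : S) + ((b : ℤ) : S) * 7 = 1 := by
          have := congrArg (fun z : ℤ => (z : S)) hab
          push_cast at this ⊢
          linear_combination this
        linear_combination habS - ((b : ℤ) : S) * hθ2
      · intro k _
        refine Dvd.dvd.mul_right ?_ _
        refine pow_dvd_pow θ ?_
        have : n * 2 ≤ n * (k + 2) := Nat.mul_le_mul_left n (by omega)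
        omega
  set Bm : Matrix (Fin 3) (Fin 3) S := (∑ k ∈ range (r + 1),
      A ^ (k + 1 + 1) * t ^ (r + 2 - (k + 1 + 1)) * ((r + 2).choose (k + 1 + 1) : Matrix (Fin 3) (Fin 3) S))
    with hBm
  have hBdvd : ∀ i j : Fin 3, θ ^ (n + μ + 1) ∣ Bm i j := by
    intro i j
    rw [hBm, Matrix.sum_apply]
    refine Finset.dvd_sum ?_
    intro k hk
    rw [hterm k i j]
    exact ((hC k hk).mul_right _).mul_right _
  have hEq : ∀ i j : Fin 3,
      σ * (1 : Matrix (Fin 3) (Fin 3) S) i j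
        = Bm i j
          + ((r + 2 : ℕ) : S) * τ ^ (r + 2 - (0 + 1)) * (θ ^ n * y i j)
          + τ ^ (r + 2) * (1 : Matrix (Fin 3) (Fin 3) S) i j := by
    intro i j
    have h0 := hone i j
    rw [hmid i j, hlast i j, Matrix.smul_apply, smul_eq_mul] at h0
    exact h0
  have hD : ∀ i j : Fin 3, θ ∣ (y i j - (1 : Matrix (Fin 3) (Fin 3) S) i j * y 0 0) := by
    intro i j
    obtain ⟨G, hG⟩ : θ ^ (n + μ + 1) ∣
        (Bm i j - (1 : Matrix (Fin 3) (Fin 3) S) i j * Bm 0 0) :=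
      dvd_sub (hBdvd i j) ((hBdvd 0 0).mul_left _)
    have hcan : θ ^ (n + μ) * (π * τ ^ (r + 2 - (0 + 1)) *
          (y i j - (1 : Matrix (Fin 3) (Fin 3) S) i j * y 0 0))
        = θ ^ (n + μ) * (-(θ * G)) := by
      have e1 := hEq i j
      have e2 := hEq 0 0
      simp only [Matrix.one_apply_eq] at e2
      linear_combination -e1 + (1 : Matrix (Fin 3) (Fin 3) S) i j * e2 - hG
        - (τ ^ (r + 2 - (0 + 1)) * θ ^ n *
            (y i j - (1 : Matrix (Fin 3) (Fin 3) S) i j * y 0 0)) * hπ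
    have hcan2 : π * τ ^ (r + 2 - (0 + 1)) *
          (y i j - (1 : Matrix (Fin 3) (Fin 3) S) i j * y 0 0) = -(θ * G) :=
      mul_left_cancel₀ (pow_ne_zero _ hθ0) hcan
    have hπd : θ ∣ π * τ ^ (r + 2 - (0 + 1)) *
        (y i j - (1 : Matrix (Fin 3) (Fin 3) S) i j * y 0 0) := by
      rw [hcan2]
      exact dvd_neg.mpr (dvd_mul_right θ G)
    have h1 : θ ∣ ε * τ - 1 := by
      have e : ε * τ - 1 = ε * (τ - ε) := by linear_combination hε2
      rw [e]; exact hτε.mul_left ε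
    have huτ : θ ∣ (ε * τ) ^ (r + 2 - (0 + 1)) - 1 := aux_unit_pow h1 _
    have hU : θ ∣ (w * π) * ((ε * τ) ^ (r + 2 - (0 + 1))) - 1 := aux_unit_mul hw huτ
    have hfin : θ ∣ ((w * π) * ((ε * τ) ^ (r + 2 - (0 + 1)))) *
        (y i j - (1 : Matrix (Fin 3) (Fin 3) S) i j * y 0 0) := by
      have hre : ((w * π) * ((ε * τ) ^ (r + 2 - (0 + 1)))) *
            (y i j - (1 : Matrix (Fin 3) (Fin 3) S) i j * y 0 0)
          = (w * ε ^ (r + 2 - (0 + 1))) * (π * τ ^ (r + 2 - (0 + 1)) *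
            (y i j - (1 : Matrix (Fin 3) (Fin 3) S) i j * y 0 0)) := by
        ring
      rw [hre]; exact hπd.mul_left _
    exact aux_cancel_unit hU hfin
  refine ⟨τ + θ ^ n * y 0 0, ?_, ?_⟩
  · have he : τ + θ ^ n * y 0 0 - ε = (τ - ε) + θ ^ n * y 0 0 := by ring
    rw [he]
    exact dvd_add hτε ((dvd_pow_self θ (by omega : n ≠ 0)).mul_right _)
  · intro i j
    have h := hy i j
    have hentry : (x - (τ + θ ^ n * y 0 0) • (1 : Matrix (Fin 3) (Fin 3) S)) i j
        = θ ^ n * (y i j - (1 : Matrix (Fin 3) (Fin 3) S) i j * y 0 0) := by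
      simp only [hAdef, htdef, Matrix.sub_apply, Matrix.smul_apply, smul_eq_mul] at h ⊢
      linear_combination h
    rw [hentry, pow_succ]
    exact mul_dvd_mul_left _ (hD i j)

lemma main_all {S : Type*} [CommRing S] [IsDomain S] (θ : S) (hθ0 : θ ≠ 0)
    (hθ2 : θ ^ 2 = -7) {p : ℕ} (hp : p.Prime) (ε : S) (hε2 : ε * ε = 1)
    (x : Matrix (Fin 3) (Fin 3) S) (σ : S)
    (hpow : x ^ p = σ • (1 : Matrix (Fin 3) (Fin 3) S))
    (hcong : ∀ i j, θ ∣ (x - ε • (1 : Matrix (Fin 3) (Fin 3) S)) i j) :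
    ∀ m : ℕ, ∃ τ : S, ∀ i j, θ ^ (m + 1) ∣ (x - τ • (1 : Matrix (Fin 3) (Fin 3) S)) i j := by
  have H : ∀ m : ℕ, ∃ τ : S, (θ ∣ τ - ε) ∧
      ∀ i j, θ ^ (m + 1) ∣ (x - τ • (1 : Matrix (Fin 3) (Fin 3) S)) i j := by
    intro m
    induction m with
    | zero => exact ⟨ε, by simp, by simpa using hcong⟩
    | succ m ih =>
      obtain ⟨τ, hτε, hτ⟩ := ih
      obtain ⟨τ', h1, h2⟩ := main_step θ hθ0 hθ2 hp ε hε2 x σ hpow (m + 1) (by omega) τ hτε hτ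
      exact ⟨τ', h1, h2⟩
  intro m; obtain ⟨τ, _, h⟩ := H m; exact ⟨τ, h⟩

lemma scalar_of_all {S : Type*} [CommRing S] (θ : S)
    (hzero : ∀ a : S, (∀ nn : ℕ, θ ^ nn ∣ a) → a = 0)
    (x : Matrix (Fin 3) (Fin 3) S)
    (hall : ∀ m : ℕ, ∃ τ : S, ∀ i j,
      θ ^ (m + 1) ∣ (x - τ • (1 : Matrix (Fin 3) (Fin 3) S)) i j) :
    ∃ τ : S, x = τ • (1 : Matrix (Fin 3) (Fin 3) S) := by
  classical
  have hoff : ∀ i j : Fin 3, i ≠ j → x i j = 0 := by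
    intro i j hij
    refine hzero _ ?_
    intro nn
    cases nn with
    | zero => simpa using one_dvd _
    | succ m =>
      obtain ⟨τ, hτ⟩ := hall m
      have h := hτ i j
      simpa [Matrix.sub_apply, Matrix.smul_apply, Matrix.one_apply_ne hij] using h
  have hdiag : ∀ i : Fin 3, x i i = x 0 0 := by
    intro i
    have hz : x i i - x 0 0 = 0 := by
      refine hzero _ ?_
      intro nn
      cases nn with
      | zero => simpa using one_dvd _
      | succ m =>
        obtain ⟨τ, hτ⟩ := hall m
        have h1 := hτ i i
        have h2 := hτ 0 0
        simp only [Matrix.sub_apply, Matrix.smul_apply, smul_eq_mul,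
          Matrix.one_apply_eq, mul_one] at h1 h2
        have h3 := dvd_sub h1 h2
        simpa using h3
    exact sub_eq_zero.mp hz
  refine ⟨x 0 0, ?_⟩
  ext i j
  by_cases hij : i = j
  · subst hij; simp [Matrix.smul_apply, Matrix.one_apply_eq, hdiag i]
  · simp [Matrix.smul_apply, Matrix.one_apply_ne hij, hoff i j hij]

open NumberField

/-- Siegel-style congruence lemma for `K = ℚ(√-7)`: let `O` be the ring of
integers of `K`, `R = O[1/2]` the localization away from `2`, and
`θ = √-7 ∈ R`.  If `p` is a rational prime, `ε = ±1`, and `x` is a `3×3`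
matrix over `R` with `x^p` a scalar matrix and `x ≡ ε·I (mod θ)`, then `x`
is a scalar matrix. -/
theorem matrix_scalar_of_pow_scalar_of_congruent_mod_sqrt_neg_seven
    (K : Type*) [Field K] [NumberField K]
    (θK : K) (hθK : θK ^ 2 = -7) (hgen : Algebra.adjoin ℚ {θK} = ⊤)
    (θO : 𝓞 K) (hθO : (algebraMap (𝓞 K) K) θO = θK)
    (p : ℕ) (hp : p.Prime)
    (ε : Localization.Away (2 : 𝓞 K)) (hε : ε = 1 ∨ ε = -1)
    (x : Matrix (Fin 3) (Fin 3) (Localization.Away (2 : 𝓞 K)))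
    (σ : Localization.Away (2 : 𝓞 K))
    (hpow : x ^ p = σ • (1 : Matrix (Fin 3) (Fin 3) (Localization.Away (2 : 𝓞 K))))
    (hcong : ∀ i j, (algebraMap (𝓞 K) (Localization.Away (2 : 𝓞 K)) θO) ∣
      (x - ε • (1 : Matrix (Fin 3) (Fin 3) (Localization.Away (2 : 𝓞 K)))) i j) :
    ∃ τ : Localization.Away (2 : 𝓞 K),
      x = τ • (1 : Matrix (Fin 3) (Fin 3) (Localization.Away (2 : 𝓞 K))) := by
  classical
  have h2 : (2 : 𝓞 K) ≠ 0 := two_ne_zero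
  have hsub : Submonoid.powers (2 : 𝓞 K) ≤ nonZeroDivisors (𝓞 K) :=
    powers_le_nonZeroDivisors_of_noZeroDivisors h2
  haveI : IsDomain (Localization.Away (2 : 𝓞 K)) :=
    IsLocalization.isDomain_of_le_nonZeroDivisors _ hsub
  have hinj : Function.Injective (algebraMap (𝓞 K) (Localization.Away (2 : 𝓞 K))) :=
    IsLocalization.injective _ hsub
  have hθOsq : θO ^ 2 = -7 := by
    have hKinj : Function.Injective (algebraMap (𝓞 K) K) := IsFractionRing.injective _ _
    apply hKinj
    rw [map_pow, hθO, hθK, map_neg]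
    exact congrArg Neg.neg (map_ofNat _ 7).symm
  set θ := algebraMap (𝓞 K) (Localization.Away (2 : 𝓞 K)) θO with hθdef
  have hθ2 : θ ^ 2 = -7 := by
    rw [hθdef, ← map_pow, hθOsq]
    simp [map_neg, map_ofNat]
  have h7R : (7 : Localization.Away (2 : 𝓞 K)) ≠ 0 := by
    have h1 : algebraMap (𝓞 K) (Localization.Away (2 : 𝓞 K)) (7 : 𝓞 K) ≠ 0 := by
      intro h
      exact (by norm_num : (7 : 𝓞 K) ≠ 0) (hinj (by rw [h, map_zero]))
    simpa [map_ofNat] using h1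
  have hθ0 : θ ≠ 0 := by
    intro h
    rw [h] at hθ2
    simp only [ne_eq, zero_pow, OfNat.ofNat_ne_zero, not_false_eq_true] at hθ2
    exact h7R (by linear_combination hθ2)
  -- the norm of θO is divisible by 7
  have hN7 : (7 : ℤ) ∣ Algebra.norm ℤ θO := by
    have hsq : (Algebra.norm ℤ θO) ^ 2 = Algebra.norm ℤ (θO ^ 2) :=
      (map_pow (Algebra.norm ℤ) θO 2).symm
    rw [hθOsq] at hsq
    let hb := Module.Free.chooseBasis ℤ (𝓞 K)
    have h7a : (-7 : 𝓞 K) = algebraMap ℤ (𝓞 K) (-7) := by simp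
    rw [h7a, Algebra.norm_algebraMap_of_basis hb] at hsq
    have hcard : 0 < Fintype.card (Module.Free.ChooseBasisIndex ℤ (𝓞 K)) := Fintype.card_pos
    have h7dvd : (7 : ℤ) ∣ (-7 : ℤ) ^ Fintype.card (Module.Free.ChooseBasisIndex ℤ (𝓞 K)) :=
      dvd_pow (by norm_num) (by omega)
    have h7sq : (7 : ℤ) ∣ (Algebra.norm ℤ θO) ^ 2 := hsq ▸ h7dvd
    exact (by norm_num : Prime (7 : ℤ)).dvd_of_dvd_pow h7sq
  have hnorm2 : Algebra.norm ℤ (2 : 𝓞 K) =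
      2 ^ Fintype.card (Module.Free.ChooseBasisIndex ℤ (𝓞 K)) := by
    let hb := Module.Free.chooseBasis ℤ (𝓞 K)
    have h2a : (2 : 𝓞 K) = algebraMap ℤ (𝓞 K) 2 := by simp
    rw [h2a, Algebra.norm_algebraMap_of_basis hb]
  -- key: an element of 𝓞 K divisible (up to powers of 2) by all powers of θO is zero
  have hbzero : ∀ b : 𝓞 K, (∀ nn : ℕ, ∃ k : ℕ, θO ^ nn ∣ 2 ^ k * b) → b = 0 := by
    intro b hb
    by_contra hb0
    have hN0 : Algebra.norm ℤ b ≠ 0 := by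
      intro h
      exact hb0 (Algebra.norm_eq_zero_iff.mp h)
    set N := (Algebra.norm ℤ b).natAbs with hN
    obtain ⟨k, hk⟩ := hb N
    have hdvd := map_dvd (Algebra.norm ℤ) hk
    rw [map_pow, map_mul, map_pow] at hdvd
    have h7N : (7 : ℤ) ^ N ∣ (Algebra.norm ℤ (2 : 𝓞 K)) ^ k * Algebra.norm ℤ b :=
      dvd_trans (pow_dvd_pow_of_dvd hN7 N) hdvd
    have hcop : IsCoprime ((7 : ℤ) ^ N) ((Algebra.norm ℤ (2 : 𝓞 K)) ^ k) := by
      rw [hnorm2, ← pow_mul]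
      exact IsCoprime.pow (Int.isCoprime_iff_gcd_eq_one.mpr (by norm_num))
    have h7Nb : (7 : ℤ) ^ N ∣ Algebra.norm ℤ b := hcop.dvd_of_dvd_mul_left h7N
    have hle : (7 : ℤ) ^ N ≤ |Algebra.norm ℤ b| :=
      Int.le_of_dvd (abs_pos.mpr hN0) ((dvd_abs _ _).mpr h7Nb)
    have hlt : |Algebra.norm ℤ b| < 7 ^ N := by
      rw [Int.abs_eq_natAbs, ← hN]
      have hNlt : N < 7 ^ N := Nat.lt_pow_self (by norm_num)
      exact_mod_cast hNlt
    linarith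
  -- key: an element of the localization divisible by all powers of θ is zero
  have hzero : ∀ a : Localization.Away (2 : 𝓞 K), (∀ nn : ℕ, θ ^ nn ∣ a) → a = 0 := by
    intro a ha
    obtain ⟨⟨b, s⟩, hs⟩ := IsLocalization.surj (Submonoid.powers (2 : 𝓞 K)) a
    have hbz : b = 0 := by
      apply hbzero
      intro nn
      obtain ⟨c, hcc⟩ := ha nn
      obtain ⟨⟨c', s'⟩, hcs⟩ := IsLocalization.surj (Submonoid.powers (2 : 𝓞 K)) c
      obtain ⟨k, hk⟩ := s'.2
      refine ⟨k, c' * ↑s, ?_⟩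
      have hEqA : algebraMap (𝓞 K) (Localization.Away (2 : 𝓞 K)) (b * ↑s')
          = algebraMap (𝓞 K) (Localization.Away (2 : 𝓞 K)) (θO ^ nn * (c' * ↑s)) := by
        rw [map_mul, ← hs, map_mul, map_mul, map_pow, ← hθdef, ← hcs]
        rw [hcc]
        ring
      have hBS := hinj hEqA
      rw [← hk] at hBS
      linear_combination hBS
    rw [hbz, map_zero] at hs
    have hs0 : algebraMap (𝓞 K) (Localization.Away (2 : 𝓞 K)) ↑s ≠ 0 := by
      intro h
      have hszero : (s : 𝓞 K) = 0 := hinj (by rw [h, map_zero])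
      exact nonZeroDivisors.ne_zero (hsub s.2) hszero
    exact (mul_eq_zero.mp hs).resolve_right hs0
  have hε2 : ε * ε = 1 := by rcases hε with h | h <;> rw [h] <;> ring
  exact scalar_of_all θ hzero x (main_all θ hθ0 hθ2 hp ε hε2 x σ hpow hcong)
end

section
/- Let R be a commutative ring and θ ∈ R a non-zero-divisor. Let n ≥ 1 and p ≥ 1 be integers, let s, σ ∈ R, let T be a 3×3 matrix over R, and set x = s·I + θⁿ·T. Suppose x^p = σ·I and suppose the image of p·s^(p−1) in R/θR is a unit. Then x is congruent to a scalar matrix modulo θ^(n+1): there exist t ∈ R and a 3×3 matrix T′ over R with x = t·I + θ^(n+1)·T′. -/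
theorem bin_aux {A : Type*} [Ring A] (a b : A) (h : Commute a b) :
    ∀ p : ℕ, ∃ m : A, (a + b) ^ (p + 1)
      = a ^ (p + 1) + (p + 1) • (a ^ p * b) + b ^ 2 * m := by
  intro p
  induction p with
  | zero => exact ⟨0, by simp⟩
  | succ p ih =>
    obtain ⟨m, hm⟩ := ih
    refine ⟨(p + 1) • a ^ p + m * (a + b), ?_⟩
    have hba : b * a = a * b := h.symm.eq
    have h1 : a ^ p * b * a = a ^ (p + 1) * b := by
      rw [mul_assoc, hba, ← mul_assoc, ← pow_succ]
    have h2 : a ^ p * b * b = b ^ 2 * a ^ p := by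
      rw [mul_assoc, ← sq, ((h.pow_left p).symm.pow_left 2).eq]
    calc (a + b) ^ (p + 2) = (a + b) ^ (p + 1) * (a + b) := by rw [pow_succ]
    _ = (a ^ (p + 1) + (p + 1) • (a ^ p * b) + b ^ 2 * m) * (a + b) := by rw [hm]
    _ = a ^ (p + 2) + a ^ (p + 1) * b + (p + 1) • (a ^ p * b * a)
          + (p + 1) • (a ^ p * b * b) + b ^ 2 * (m * (a + b)) := by
        simp [mul_add, add_mul, smul_mul_assoc, pow_succ, mul_assoc]; abel
    _ = a ^ (p + 2) + (p + 2) • (a ^ (p + 1) * b)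
          + b ^ 2 * ((p + 1) • a ^ p + m * (a + b)) := by
        rw [h1, h2]
        simp only [mul_add, mul_smul_comm, succ_nsmul]
        abel

/-- Inductive step of Siegel's congruence argument, for `p` invertible mod `θ`:
if `θ` is a non-zero-divisor of a commutative ring `R`, `n, p ≥ 1`,
`x = s·I + θⁿ·T` is a `3×3` matrix with `x^p = σ·I`, and `p·s^(p-1)` is
invertible modulo `θ`, then `x` is congruent to a scalar matrix mod `θ^(n+1)`. -/
theorem scalar_mod_theta_succ_of_pow_scalar
    (R : Type*) [CommRing R] (θ : R) (hθ : θ ∈ nonZeroDivisors R)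
    (n p : ℕ) (hn : 1 ≤ n) (hp : 1 ≤ p) (s σ : R)
    (T : Matrix (Fin 3) (Fin 3) R)
    (hpow : (s • (1 : Matrix (Fin 3) (Fin 3) R) + θ ^ n • T) ^ p
      = σ • (1 : Matrix (Fin 3) (Fin 3) R))
    (hunit : IsUnit (Ideal.Quotient.mk (Ideal.span {θ}) ((p : R) * s ^ (p - 1)))) :
    ∃ (t : R) (T' : Matrix (Fin 3) (Fin 3) R),
      s • (1 : Matrix (Fin 3) (Fin 3) R) + θ ^ n • T
        = t • (1 : Matrix (Fin 3) (Fin 3) R) + θ ^ (n + 1) • T' := by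
  set c : R := (p : R) * s ^ (p - 1) with hc
  -- get an inverse of c mod θ
  obtain ⟨w, hw⟩ := hunit.exists_left_inv
  obtain ⟨u, rfl⟩ := Ideal.Quotient.mk_surjective w
  have hdvd1 : θ ∣ u * c - 1 := by
    have : Ideal.Quotient.mk (Ideal.span {θ}) (u * c - 1) = 0 := by
      rw [map_sub, map_mul, hw, map_one, sub_self]
    rwa [Ideal.Quotient.eq_zero_iff_mem, Ideal.mem_span_singleton] at this
  -- binomial expansion
  obtain ⟨q, hq⟩ : ∃ q, p = q + 1 := ⟨p - 1, (Nat.succ_pred_eq_of_pos hp).symm⟩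
  obtain ⟨m, hm⟩ := bin_aux (s • (1 : Matrix (Fin 3) (Fin 3) R)) (θ ^ n • T)
    ((Commute.one_left (θ ^ n • T)).smul_left s) q
  rw [← hq] at hm
  have hq1 : p - 1 = q := by omega
  have e1 : (s • (1 : Matrix (Fin 3) (Fin 3) R)) ^ p = s ^ p • 1 := by
    rw [smul_pow, one_pow]
  have e2 : p • ((s • (1 : Matrix (Fin 3) (Fin 3) R)) ^ q * θ ^ n • T) = (c * θ ^ n) • T := by
    rw [smul_pow, one_pow, smul_mul_assoc, one_mul, smul_smul,
      ← Nat.cast_smul_eq_nsmul R, smul_smul]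
    congr 1
    rw [hc, hq1]; ring
  have e3 : (θ ^ n • T) ^ 2 * m = (θ ^ n * θ ^ n) • (T ^ 2 * m) := by
    rw [smul_pow, smul_mul_assoc, sq (θ ^ n)]
  have key : σ • (1 : Matrix (Fin 3) (Fin 3) R)
      = s ^ p • 1 + ((c * θ ^ n) • T + (θ ^ n * θ ^ n) • (T ^ 2 * m)) := by
    rw [← hpow, hm, e1, e2, e3, add_assoc]
  -- entrywise equations
  have entry : ∀ i j : Fin 3,
      σ * (if i = j then (1:R) else 0) = s ^ p * (if i = j then (1:R) else 0)
        + (c * θ ^ n * T i j + θ ^ n * θ ^ n * (T ^ 2 * m) i j) := by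
    intro i j
    have := congrFun (congrFun key i) j
    simpa [Matrix.add_apply, Matrix.smul_apply, Matrix.one_apply, smul_eq_mul,
      mul_add] using this
  have hθn : θ ^ n ∈ nonZeroDivisors R := pow_mem hθ n
  have hθdvdθn : θ ∣ θ ^ n := dvd_pow_self θ (by omega)
  -- θ divides c * (T i j - diag entry)
  have hcdvd : ∀ i j : Fin 3, θ ∣ c * (T i j - if i = j then T 0 0 else 0) := by
    intro i j
    by_cases hij : i = j
    · subst hij
      have e1 := entry i i
      have e2 := entry 0 0
      simp only [if_pos rfl, mul_one] at e1 e2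
      have h0 : θ ^ n * (c * (T i i - T 0 0) + θ ^ n * ((T ^ 2 * m) i i - (T ^ 2 * m) 0 0))
          = θ ^ n * 0 := by linear_combination e2 - e1
      have h0' := (mul_cancel_left_mem_nonZeroDivisors hθn).mp h0
      have : c * (T i i - T 0 0) = θ ^ n * ((T ^ 2 * m) 0 0 - (T ^ 2 * m) i i) := by
        linear_combination h0'
      simp only [if_pos rfl]
      exact this ▸ Dvd.dvd.mul_right hθdvdθn _
    · have e1 := entry i j
      simp only [if_neg hij, mul_zero] at e1
      have h0 : θ ^ n * (c * T i j + θ ^ n * (T ^ 2 * m) i j) = θ ^ n * 0 := by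
        linear_combination -e1
      have h0' := (mul_cancel_left_mem_nonZeroDivisors hθn).mp h0
      have : c * T i j = θ ^ n * (-(T ^ 2 * m) i j) := by linear_combination h0'
      simp only [if_neg hij, sub_zero]
      exact this ▸ Dvd.dvd.mul_right hθdvdθn _
  have hdiv : ∀ i j : Fin 3, θ ∣ (T i j - if i = j then T 0 0 else 0) := by
    intro i j
    set x := T i j - if i = j then T 0 0 else 0 with hx
    have : x = u * (c * x) - (u * c - 1) * x := by ring
    rw [this]
    exact dvd_sub ((hcdvd i j).mul_left u) (hdvd1.mul_right x)
  choose T' hT' using hdiv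
  refine ⟨s + θ ^ n * T 0 0, Matrix.of T', ?_⟩
  ext i j
  simp only [Matrix.add_apply, Matrix.smul_apply, Matrix.one_apply, smul_eq_mul,
    Matrix.of_apply]
  have h := hT' i j
  by_cases hij : i = j
  · simp only [if_pos hij] at h ⊢
    rw [pow_succ]
    linear_combination θ ^ n * h
  · simp only [if_neg hij, sub_zero] at h ⊢
    rw [pow_succ]
    linear_combination θ ^ n * h
end

section
/- Let R be a commutative ring and θ ∈ R a non-zero-divisor satisfying θ² = −7 in R. Let n ≥ 1 be an integer, let s, σ ∈ R with the image of s in R/θR a unit, let T be a 3×3 matrix over R, and set x = s·I + θⁿ·T. Suppose x⁷ = σ·I. Then x is congruent to a scalar matrix modulo θ^(n+1): there exist t ∈ R and a 3×3 matrix T′ over R with x = t·I + θ^(n+1)·T′. -/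
private lemma expand7 {R A : Type*} [CommRing R] [Ring A] [Algebra R A] (s u : R) (T : A) :
    (s • (1:A) + u • T)^7 = (s^7) • 1 + (7*s^6*u) • T + (21*s^5*u^2) • T^2
      + (35*s^4*u^3) • T^3 + (35*s^3*u^4) • T^4 + (21*s^2*u^5) • T^5
      + (7*s*u^6) • T^6 + (u^7) • T^7 := by
  simp only [pow_succ, pow_zero, one_mul, add_mul, mul_add, smul_mul_assoc,
    mul_smul_comm, one_mul, mul_one, smul_smul]
  module

/-- Inductive step of Siegel's congruence argument for the exceptional prime
`p = 7 = -θ²`: if `θ` is a non-zero-divisor of a commutative ring `R` with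
`θ² = -7`, `n ≥ 1`, `s` is invertible modulo `θ`, and the `3×3` matrix
`x = s·I + θⁿ·T` satisfies `x⁷ = σ·I`, then `x` is congruent to a scalar
matrix mod `θ^(n+1)`. -/
theorem scalar_mod_theta_succ_of_pow_seven_scalar
    (R : Type*) [CommRing R] (θ : R) (hθ : θ ∈ nonZeroDivisors R)
    (hθ2 : θ * θ = -7)
    (n : ℕ) (hn : 1 ≤ n) (s σ : R)
    (hs : IsUnit (Ideal.Quotient.mk (Ideal.span {θ}) s))
    (T : Matrix (Fin 3) (Fin 3) R)
    (hpow : (s • (1 : Matrix (Fin 3) (Fin 3) R) + θ ^ n • T) ^ 7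
      = σ • (1 : Matrix (Fin 3) (Fin 3) R)) :
    ∃ (t : R) (T' : Matrix (Fin 3) (Fin 3) R),
      s • (1 : Matrix (Fin 3) (Fin 3) R) + θ ^ n • T
        = t • (1 : Matrix (Fin 3) (Fin 3) R) + θ ^ (n + 1) • T' := by
  obtain ⟨m, rfl⟩ : ∃ m, n = m + 1 := ⟨n - 1, (Nat.succ_pred_eq_of_pos hn).symm⟩
  have h7 : (7 : R) = -(θ * θ) := by rw [hθ2]; ring
  obtain ⟨E, key⟩ : ∃ E : Matrix (Fin 3) (Fin 3) R,
      σ • (1 : Matrix (Fin 3) (Fin 3) R)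
        = (s^7) • 1 + (-(s^6) * θ^(m+3)) • T + (θ^(m+3) * θ) • E := by
    refine ⟨(-(3*s^5*θ^m)) • T^2 + (-(5*s^4*θ^(2*m+1))) • T^3
      + (-(5*s^3*θ^(3*m+2))) • T^4 + (-(3*s^2*θ^(4*m+3))) • T^5
      + (-(s*θ^(5*m+4))) • T^6 + (θ^(6*m+3)) • T^7, ?_⟩
    rw [← hpow, expand7]
    have e1 : 7*s^6*θ^(m+1) = -(s^6) * θ^(m+3) := by rw [h7]; ring
    have e2 : 21*s^5*(θ^(m+1))^2 = (θ^(m+3)*θ) * (-(3*s^5*θ^m)) := by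
      rw [show (21:R) = 3*7 by norm_num, h7]; ring
    have e3 : 35*s^4*(θ^(m+1))^3 = (θ^(m+3)*θ) * (-(5*s^4*θ^(2*m+1))) := by
      rw [show (35:R) = 5*7 by norm_num, h7]; ring
    have e4 : 35*s^3*(θ^(m+1))^4 = (θ^(m+3)*θ) * (-(5*s^3*θ^(3*m+2))) := by
      rw [show (35:R) = 5*7 by norm_num, h7]; ring
    have e5 : 21*s^2*(θ^(m+1))^5 = (θ^(m+3)*θ) * (-(3*s^2*θ^(4*m+3))) := by
      rw [show (21:R) = 3*7 by norm_num, h7]; ring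
    have e6 : 7*s*(θ^(m+1))^6 = (θ^(m+3)*θ) * (-(s*θ^(5*m+4))) := by rw [h7]; ring
    have e7 : (θ^(m+1))^7 = (θ^(m+3)*θ) * θ^(6*m+3) := by ring
    rw [e1, e2, e3, e4, e5, e6, e7]
    simp only [smul_add, smul_smul]
    abel
  have hent : ∀ i j, θ^(m+3) * (s^6 * T i j)
      = (s^7 - σ) * (if i = j then 1 else 0) + θ^(m+3) * (θ * E i j) := by
    intro i j
    have h0 := congrFun (congrFun key i) j
    simp only [Matrix.add_apply, Matrix.smul_apply, Matrix.one_apply, smul_eq_mul] at h0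
    linear_combination h0
  have cancel : ∀ a b : R, θ^(m+3) * a = θ^(m+3) * b → a = b := fun a b h =>
    (mul_cancel_left_mem_nonZeroDivisors (pow_mem hθ (m+3))).1 h
  have hsu : IsUnit (Ideal.Quotient.mk (Ideal.span {θ}) (s^6)) := by
    rw [map_pow]; exact hs.pow 6
  have hdvd : ∀ i j, θ ∣ (T i j - (if i = j then T 0 0 else 0)) := by
    intro i j
    have key2 : ∀ c : R, s^6 * c = θ * (E i j - (if i = j then E 0 0 else 0)) →
        θ ∣ c := by
      intro c hc
      have hq : Ideal.Quotient.mk (Ideal.span {θ}) (s^6) *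
          Ideal.Quotient.mk (Ideal.span {θ}) c = 0 := by
        rw [← map_mul, hc, map_mul, Ideal.Quotient.eq_zero_iff_mem.2
          (Ideal.mem_span_singleton_self θ), zero_mul]
      have := (hsu.mul_right_eq_zero).1 hq
      rwa [Ideal.Quotient.eq_zero_iff_mem, Ideal.mem_span_singleton] at this
    by_cases hij : i = j
    · subst hij
      have h1 := hent i i
      have h2 := hent 0 0
      rw [if_pos rfl] at h1 h2 ⊢
      refine key2 _ (cancel _ _ ?_)
      rw [if_pos rfl]
      linear_combination h1 - h2
    · have h1 := hent i j
      rw [if_neg hij] at h1 ⊢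
      refine key2 _ (cancel _ _ ?_)
      rw [if_neg hij]
      linear_combination h1
  choose T' hT' using hdvd
  refine ⟨s + θ^(m+1) * T 0 0, Matrix.of (fun i j => T' i j), ?_⟩
  ext i j
  simp only [Matrix.add_apply, Matrix.smul_apply, Matrix.one_apply, smul_eq_mul,
    Matrix.of_apply]
  have h := hT' i j
  by_cases hij : i = j
  · simp only [if_pos hij] at h ⊢
    linear_combination θ^(m+1) * h
  · simp only [if_neg hij, sub_zero] at h ⊢
    linear_combination θ^(m+1) * h
end

section
/- Let K be a field, n an odd positive integer, A an invertible n×n matrix over K, and c ∈ K with A·A = c·I. Then there exists d ∈ K with d ≠ 0, d² = c, and (d⁻¹ · A)² = I. In particular, every involution in PGL_n(K) for n odd lifts to an involution in GL_n(K). -/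
/-- Let `K` be a field, `n` an odd positive integer, `A` an invertible `n×n`
matrix over `K` and `c ∈ K` with `A·A = c·I`.  Then there is `d ∈ K`, `d ≠ 0`,
with `d² = c` and `(d⁻¹·A)² = I`.  In particular every involution in
`PGL_n(K)`, `n` odd, lifts to an involution in `GL_n(K)`. -/
theorem involution_lift
    (K : Type*) [Field K] (n : ℕ) (hodd : Odd n) (hpos : 0 < n)
    (A : Matrix (Fin n) (Fin n) K) (hA : IsUnit A)
    (c : K) (h : A * A = c • (1 : Matrix (Fin n) (Fin n) K)) :
    ∃ d : K, d ≠ 0 ∧ d ^ 2 = c ∧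
      (d⁻¹ • A) * (d⁻¹ • A) = (1 : Matrix (Fin n) (Fin n) K) := by
  obtain ⟨k, hk⟩ := hodd
  have hdet : A.det ≠ 0 := by
    simpa [Matrix.isUnit_iff_isUnit_det, isUnit_iff_ne_zero] using hA
  have hcn : A.det ^ 2 = c ^ n := by
    have := congrArg Matrix.det h
    simpa [Matrix.det_mul, Matrix.det_smul, pow_two, Fintype.card_fin] using this
  have hc : c ≠ 0 := by
    intro hc0
    rw [hc0, zero_pow hpos.ne'] at hcn
    exact hdet (pow_eq_zero_iff (n := 2) two_ne_zero |>.mp hcn)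
  refine ⟨A.det / c ^ k, ?_, ?_, ?_⟩
  · exact div_ne_zero hdet (pow_ne_zero _ hc)
  · field_simp
    rw [hcn, hk]
    ring
  · have hd2 : (A.det / c ^ k) ^ 2 = c := by
      field_simp
      rw [hcn, hk]; ring
    have hd : A.det / c ^ k ≠ 0 := div_ne_zero hdet (pow_ne_zero _ hc)
    rw [Matrix.smul_mul, Matrix.mul_smul, h, smul_smul, smul_smul]
    rw [show (A.det / c ^ k)⁻¹ * (A.det / c ^ k)⁻¹ * c = ((A.det / c ^ k) ^ 2)⁻¹ * c by ring]
    rw [hd2, inv_mul_cancel₀ hc, one_smul]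
end

section
/- Let K be a field and A a 3×3 matrix over K with A·A = c·I for some c ∈ K, and suppose A is not a scalar matrix. Let L be a field extension of K (a field that is a K-algebra), let v ∈ L³ be a nonzero vector and μ ∈ L a scalar with (the image of A under the entrywise map algebraMap K L) applied to v equal to μ·v. Then there exists a K-subspace W of K³ with W ≠ 0 and W ≠ K³, invariant under A, such that v lies in the L-span of the image of W under the coordinatewise map K³ → L³. -/
open Matrix

/-- Fixed points of a non-scalar matrix involution lie on rational lines:
if `A` is a `3×3` matrix over a field `K` with `A·A = c·I` which is not scalar,
`L/K` is a field extension, and `v ∈ L³` is a nonzero eigenvector of `A`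
(viewed over `L`) with eigenvalue `μ`, then there is a nontrivial proper
`A`-invariant `K`-subspace `W` of `K³` such that `v` lies in the `L`-span of
the image of `W` in `L³`. -/
theorem eigenvector_in_span_of_rational_invariant_subspace
    (K : Type*) [Field K] (A : Matrix (Fin 3) (Fin 3) K) (c : K)
    (hinv : A * A = c • (1 : Matrix (Fin 3) (Fin 3) K))
    (hns : ¬∃ t : K, A = t • (1 : Matrix (Fin 3) (Fin 3) K))
    (L : Type*) [Field L] [Algebra K L]
    (v : Fin 3 → L) (hv : v ≠ 0) (μ : L)
    (heig : (A.map (algebraMap K L)) *ᵥ v = μ • v) :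
    ∃ W : Submodule K (Fin 3 → K), W ≠ ⊥ ∧ W ≠ ⊤ ∧
      (∀ w ∈ W, A *ᵥ w ∈ W) ∧
      v ∈ Submodule.span L
        ((fun w : Fin 3 → K => fun i => algebraMap K L (w i)) '' (W : Set (Fin 3 → K))) := by
  classical
  have halg : Function.Injective (algebraMap K L) := (algebraMap K L).injective
  -- Step 1: μ² = algebraMap c
  have hmul : (A.map (algebraMap K L)) *ᵥ ((A.map (algebraMap K L)) *ᵥ v)
      = (algebraMap K L c) • v := by
    rw [Matrix.mulVec_mulVec, ← Matrix.map_mul, hinv]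
    ext i
    simp [Matrix.mulVec, Matrix.map_apply, Matrix.smul_apply, Matrix.one_apply, dotProduct,
      apply_ite, mul_ite, Finset.sum_ite_eq]
  have hsmul : (μ * μ) • v = (algebraMap K L c) • v := by
    calc (μ * μ) • v = μ • (μ • v) := by rw [smul_smul]
    _ = μ • ((A.map (algebraMap K L)) *ᵥ v) := by rw [heig]
    _ = (A.map (algebraMap K L)) *ᵥ (μ • v) := (Matrix.mulVec_smul _ _ _).symm
    _ = (A.map (algebraMap K L)) *ᵥ ((A.map (algebraMap K L)) *ᵥ v) := by rw [heig]
    _ = (algebraMap K L c) • v := hmul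
  have hmu2 : μ * μ = algebraMap K L c := by
    have h0 : (μ * μ - algebraMap K L c) • v = 0 := by
      rw [sub_smul, hsmul, sub_self]
    rcases smul_eq_zero.1 h0 with h | h
    · exact sub_eq_zero.mp h
    · exact absurd h hv
  -- Step 2: c is a square in K
  obtain ⟨m, hm⟩ : ∃ m : K, m * m = c := by
    by_cases hc : c = 0
    · exact ⟨0, by simp [hc]⟩
    · refine ⟨A.det / c, ?_⟩
      have hdet : A.det * A.det = c * c * c := by
        have h := congrArg Matrix.det hinv
        rw [Matrix.det_mul, Matrix.det_smul, Matrix.det_one] at h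
        rw [h]; norm_num; ring
      field_simp
      linear_combination hdet
  -- Step 3: μ is in the image of K
  obtain ⟨m', hm', hm'sq⟩ : ∃ m' : K, μ = algebraMap K L m' ∧ m' * m' = c := by
    have hfac : (μ - algebraMap K L m) * (μ + algebraMap K L m) = 0 := by
      have : algebraMap K L m * algebraMap K L m = algebraMap K L c := by
        rw [← _root_.map_mul, hm]
      linear_combination hmu2 - this
    rcases mul_eq_zero.1 hfac with h | h
    · exact ⟨m, by linear_combination h, hm⟩
    · exact ⟨-m, by rw [_root_.map_neg]; linear_combination h, by rw [neg_mul_neg, hm]⟩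
  -- Step 4: the matrix N = A - m'·1 is nonzero
  set N : Matrix (Fin 3) (Fin 3) K := A - m' • 1 with hNdef
  have hNne : N ≠ 0 := fun h => hns ⟨m', by rwa [sub_eq_zero] at h⟩
  obtain ⟨i₀, j₀, hij⟩ : ∃ i j, N i j ≠ 0 := by
    by_contra h
    push_neg at h
    exact hNne (by ext i j; simpa using h i j)
  have ha : algebraMap K L (N i₀ j₀) ≠ 0 := fun h => hij (halg (by simpa using h))
  -- the eigenvector is killed by N over L
  have hker : ∀ i, ∑ j, algebraMap K L (N i j) * v j = 0 := by
    intro i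
    have h1 : ∑ j, algebraMap K L (A i j) * v j = μ * v i := by
      have := congrFun heig i
      simpa [Matrix.mulVec, dotProduct, Matrix.map_apply] using this
    have h2 : ∑ j, algebraMap K L ((m' • (1 : Matrix (Fin 3) (Fin 3) K)) i j) * v j
        = μ * v i := by
      simp [Matrix.smul_apply, Matrix.one_apply, apply_ite, mul_ite, ite_mul,
        Finset.sum_ite_eq, hm']
    simp only [hNdef, Matrix.sub_apply, map_sub, sub_mul]
    rw [Finset.sum_sub_distrib, h1, h2, sub_self]
  -- Step 5: the invariant hyperplane
  refine ⟨LinearMap.ker ((LinearMap.proj i₀).comp N.mulVecLin), ?_, ?_, ?_, ?_⟩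
  · -- W ≠ ⊥
    obtain ⟨j₁, hj₁⟩ := exists_ne j₀
    rw [Submodule.ne_bot_iff]
    refine ⟨N i₀ j₁ • (Pi.single j₀ 1 : Fin 3 → K) - N i₀ j₀ • (Pi.single j₁ 1 : Fin 3 → K),
      ?_, ?_⟩
    · rw [LinearMap.mem_ker]
      show (N *ᵥ _) i₀ = 0
      simp only [Matrix.mulVec, dotProduct, Pi.sub_apply, Pi.smul_apply, smul_eq_mul,
        Pi.single_apply, mul_ite, mul_one, mul_zero, mul_sub, Finset.sum_sub_distrib,
        Finset.sum_ite_eq, Finset.sum_ite_eq', Finset.mem_univ, if_true]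
      ring
    · intro h
      have := congrFun h j₁
      simp [Pi.single_apply, hj₁] at this
      exact hij this
  · -- W ≠ ⊤
    intro h
    have hmem : ((Pi.single j₀ 1 : Fin 3 → K)) ∈
        LinearMap.ker ((LinearMap.proj i₀).comp N.mulVecLin) := h ▸ Submodule.mem_top
    rw [LinearMap.mem_ker] at hmem
    apply hij
    have h2 : (N *ᵥ (Pi.single j₀ 1 : Fin 3 → K)) i₀ = 0 := hmem
    simpa [Matrix.mulVec, dotProduct, Pi.single_apply, mul_ite, Finset.sum_ite_eq,
      Finset.sum_ite_eq'] using h2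
  · -- invariance
    intro w hw
    rw [LinearMap.mem_ker] at hw ⊢
    have hw' : (N *ᵥ w) i₀ = 0 := hw
    have hNA : N * A = (-m') • N := by
      have h3 : A * A = (m' * m') • (1 : Matrix (Fin 3) (Fin 3) K) := by rw [hm'sq]; exact hinv
      rw [hNdef, sub_mul, Matrix.smul_mul, one_mul, h3]
      module
    show (N *ᵥ (A *ᵥ w)) i₀ = 0
    rw [Matrix.mulVec_mulVec, hNA, Matrix.smul_mulVec]
    simp [hw']
  · -- v lies in the span of the image of W
    set b : Fin 3 → (Fin 3 → K) :=
      fun j => N i₀ j₀ • (Pi.single j 1 : Fin 3 → K) - N i₀ j • (Pi.single j₀ 1 : Fin 3 → K)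
      with hbdef
    have hbW : ∀ j, b j ∈ LinearMap.ker ((LinearMap.proj i₀).comp N.mulVecLin) := by
      intro j
      rw [LinearMap.mem_ker]
      show (N *ᵥ b j) i₀ = 0
      simp only [hbdef, Matrix.mulVec, dotProduct, Pi.sub_apply, Pi.smul_apply, smul_eq_mul,
        Pi.single_apply, mul_ite, mul_one, mul_zero, mul_sub, Finset.sum_sub_distrib,
        Finset.sum_ite_eq, Finset.sum_ite_eq', Finset.mem_univ, if_true]
      ring
    have hbval : ∀ j i, algebraMap K L (b j i)
        = (if i = j then algebraMap K L (N i₀ j₀) else 0)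
          - (if i = j₀ then algebraMap K L (N i₀ j) else 0) := by
      intro j i
      simp [hbdef, Pi.single_apply, apply_ite (algebraMap K L)]
    have key : v = ∑ j, ((algebraMap K L (N i₀ j₀))⁻¹ * v j) •
        (fun i => algebraMap K L (b j i)) := by
      funext i
      have expand : ∀ j : Fin 3, ((algebraMap K L (N i₀ j₀))⁻¹ * v j) * (algebraMap K L (b j i))
          = (if i = j then v j else 0)
            - (if i = j₀ then (algebraMap K L (N i₀ j₀))⁻¹ * (algebraMap K L (N i₀ j) * v j)
               else 0) := by
        intro j
        rw [hbval]
        rcases eq_or_ne i j with rfl | h1 <;> rcases eq_or_ne i j₀ with rfl | h2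
        · simp only [if_pos rfl, if_true, sub_self, mul_zero, zero_sub]
          field_simp
          simp
        · simp only [if_pos rfl, if_true, if_neg h2, sub_zero]
          field_simp
        · simp only [if_neg h1, if_pos rfl, zero_sub, if_true]
          ring
        · simp [h1, h2]
      rw [Finset.sum_apply]
      simp only [Pi.smul_apply, smul_eq_mul]
      rw [Finset.sum_congr rfl (fun j _ => expand j), Finset.sum_sub_distrib]
      by_cases h2 : i = j₀
      · subst h2
        simp only [if_pos rfl, Finset.sum_ite_eq, Finset.mem_univ, if_true]
        rw [← Finset.mul_sum]
        rw [show ∑ j, algebraMap K L (N i₀ j) * v j = 0 from hker i₀]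
        simp
      · simp [h2, Finset.sum_ite_eq]
    rw [key]
    exact Submodule.sum_mem _ fun j _ =>
      Submodule.smul_mem _ _ (Submodule.subset_span ⟨b j, hbW j, rfl⟩)
end

section
/- Let K be a field complete with respect to a non-Archimedean norm, let A be a commutative K-algebra which is finitely generated as a K-algebra, and let G be a finite group acting on A by K-algebra automorphisms. Let x and x′ be multiplicative seminorms on A extending the norm of K, and suppose x(a) = x′(a) for every G-invariant element a ∈ A (i.e. every a with g • a = a for all g ∈ G). Then there exists g ∈ G such that x′(a) = x(g • a) for all a ∈ A. -/
open Finset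

section Helpers

variable {A : Type*} [CommRing A] {ι : Type*}

lemma seminorm_sum_le (x : MulRingSeminorm A) (S : Finset ι) (f : ι → A) :
    x (∑ i ∈ S, f i) ≤ ∑ i ∈ S, x (f i) := by
  classical
  induction S using Finset.induction with
  | empty => simp
  | insert a s hnot ih =>
    rw [Finset.sum_insert hnot, Finset.sum_insert hnot]
    exact le_trans (map_add_le_add x _ _) (by gcongr)

/-- A multiplicative seminorm extending a nonarchimedean norm is nonarchimedean. -/
lemma seminorm_isNonarchimedean {K : Type*} [NormedField K]
    (hna : ∀ k k' : K, ‖k + k'‖ ≤ max ‖k‖ ‖k'‖) [Algebra K A]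
    (x : MulRingSeminorm A) (hx : ∀ k : K, x (algebraMap K A k) = ‖k‖) :
    IsNonarchimedean ⇑x := by
  have hnatK : ∀ m : ℕ, ‖(m : K)‖ ≤ 1 := by
    intro m
    induction m with
    | zero => simp
    | succ m ih =>
      push_cast
      refine le_trans (hna _ 1) ?_
      simp [ih]
  have hnat : ∀ m : ℕ, x (m : A) ≤ 1 := by
    intro m
    rw [← map_natCast (algebraMap K A) m, hx]
    exact hnatK m
  intro p q
  set M := max (x p) (x q) with hM
  have hM0 : 0 ≤ M := le_trans (apply_nonneg x p) (le_max_left _ _)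
  have key : ∀ m : ℕ, x (p + q) ^ m ≤ (m + 1) * M ^ m := by
    intro m
    have h1 : x (p + q) ^ m = x ((p + q) ^ m) := (map_pow x _ m).symm
    rw [h1, add_pow]
    refine le_trans (seminorm_sum_le x _ _) ?_
    have hterm : ∀ i ∈ Finset.range (m + 1),
        x (p ^ i * q ^ (m - i) * (m.choose i : A)) ≤ M ^ m := by
      intro i hi
      rw [Finset.mem_range] at hi
      have he : x (p ^ i * q ^ (m - i) * (m.choose i : A))
          = x p ^ i * x q ^ (m - i) * x ((m.choose i : A)) := by
        rw [map_mul, map_mul, map_pow, map_pow]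
      rw [he]
      have h2 : x p ^ i * x q ^ (m - i) ≤ M ^ i * M ^ (m - i) := by
        gcongr <;> simp [hM, apply_nonneg, le_max_left, le_max_right]
      have h3 : M ^ i * M ^ (m - i) = M ^ m := by
        rw [← pow_add]; congr 1; omega
      have h4 : x p ^ i * x q ^ (m - i) * x ((m.choose i : A)) ≤ M ^ m * 1 := by
        apply mul_le_mul (h2.trans h3.le) (hnat _) (apply_nonneg _ _)
        exact pow_nonneg hM0 m
      simpa using h4
    calc ∑ i ∈ Finset.range (m + 1), x (p ^ i * q ^ (m - i) * (m.choose i : A))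
        ≤ ∑ _i ∈ Finset.range (m + 1), M ^ m := Finset.sum_le_sum hterm
      _ = (m + 1) * M ^ m := by
        rw [Finset.sum_const, Finset.card_range, nsmul_eq_mul]
        push_cast; ring
  by_contra hlt
  push_neg at hlt
  set y := x (p + q) with hy
  have hy0 : 0 < y := lt_of_le_of_lt hM0 hlt
  rcases eq_or_lt_of_le hM0 with hM0' | hMpos
  · have := key 1
    rw [pow_one, pow_one, ← hM0'] at this
    nlinarith
  · -- M > 0; set t = y / M > 1
    set t := y / M with ht
    have ht1 : 1 < t := (one_lt_div hMpos).mpr hlt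
    have htm : ∀ m : ℕ, t ^ m ≤ m + 1 := by
      intro m
      rw [ht, div_pow, div_le_iff₀ (by positivity)]
      calc y ^ m ≤ (m + 1) * M ^ m := key m
        _ = (↑m + 1) * M ^ m := by push_cast; ring
    set s := Real.sqrt t with hs
    have hs1 : 1 < s := by
      rw [hs]
      nlinarith [Real.sq_sqrt (by linarith : (0:ℝ) ≤ t), Real.sqrt_nonneg t,
        Real.sqrt_lt_sqrt (by norm_num : (0:ℝ) ≤ 1) ht1, Real.sqrt_one]
    have hssq : s ^ 2 = t := by
      rw [hs, sq, Real.mul_self_sqrt (by linarith)]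
    set B := s - 1 with hB
    have hB0 : 0 < B := by simp [hB]; linarith
    obtain ⟨m₀, hm₀⟩ := exists_nat_ge (1 / B ^ 2)
    set m := m₀ + 1 with hm
    have hmB : 1 ≤ (m : ℝ) * B ^ 2 := by
      rw [div_le_iff₀ (by positivity)] at hm₀
      have : (m₀ : ℝ) ≤ (m : ℝ) := by push_cast [hm]; linarith
      nlinarith [sq_nonneg B]
    have hbern : 1 + (m : ℝ) * B ≤ s ^ m := by
      have := one_add_mul_le_pow (a := B) (by linarith) m
      calc 1 + (m : ℝ) * B = 1 + m * B := rfl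
        _ ≤ (1 + B) ^ m := this
        _ = s ^ m := by rw [hB]; ring_nf
    have hcontr : (m : ℝ) + 1 < t ^ m := by
      have h5 : t ^ m = (s ^ m) ^ 2 := by rw [← hssq, ← pow_mul, ← pow_mul, mul_comm]
      have h6 : (1 + (m : ℝ) * B) ^ 2 ≤ (s ^ m) ^ 2 := by
        have : (0:ℝ) ≤ 1 + (m:ℝ) * B := by positivity
        nlinarith
      have h7 : (m : ℝ) + 1 < (1 + (m : ℝ) * B) ^ 2 := by
        have hm1 : (1:ℝ) ≤ (m : ℝ) := by
          rw [hm]; push_cast; linarith [Nat.cast_nonneg (α := ℝ) m₀]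
        nlinarith
      linarith [h5 ▸ h6]
    have := htm m
    linarith

end Helpers
open Finset

section ProdHelpers
variable {ι : Type*}

lemma prod_le_pow_card_real (U : Finset ι) (f : ι → ℝ) (s : ℝ)
    (h0 : ∀ i ∈ U, 0 ≤ f i) (h : ∀ i ∈ U, f i ≤ s) :
    ∏ i ∈ U, f i ≤ s ^ U.card := by
  classical
  induction U using Finset.induction with
  | empty => simp
  | insert a U hnot ih =>
    have hs0 : 0 ≤ s := le_trans (h0 a (mem_insert_self a U)) (h a (mem_insert_self a U))
    rw [Finset.prod_insert hnot, Finset.card_insert_of_notMem hnot, pow_succ, mul_comm (s ^ U.card) s]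
    apply mul_le_mul (h a (mem_insert_self a U))
      (ih (fun i hi => h0 i (mem_insert_of_mem hi)) (fun i hi => h i (mem_insert_of_mem hi)))
      (Finset.prod_nonneg (fun i hi => h0 i (mem_insert_of_mem hi))) hs0

lemma pow_card_le_prod_real (U : Finset ι) (f : ι → ℝ) (s : ℝ) (hs : 0 ≤ s)
    (h : ∀ i ∈ U, s ≤ f i) :
    s ^ U.card ≤ ∏ i ∈ U, f i := by
  classical
  induction U using Finset.induction with
  | empty => simp
  | insert a U hnot ih =>
    rw [Finset.prod_insert hnot, Finset.card_insert_of_notMem hnot, pow_succ, mul_comm (s ^ U.card) s]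
    exact mul_le_mul (h a (mem_insert_self a U)) (ih (fun i hi => h i (mem_insert_of_mem hi)))
      (pow_nonneg hs _) (le_trans hs (h a (mem_insert_self a U)))

lemma pow_card_lt_prod_real (U : Finset ι) (hU : U.Nonempty) (f : ι → ℝ) (s : ℝ) (hs : 0 < s)
    (h : ∀ i ∈ U, s < f i) :
    s ^ U.card < ∏ i ∈ U, f i := by
  classical
  obtain ⟨u, hu⟩ := hU
  rw [← Finset.prod_erase_mul U f hu, ← Finset.card_erase_add_one hu, pow_succ]
  have h1 : s ^ (U.erase u).card ≤ ∏ i ∈ U.erase u, f i :=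
    pow_card_le_prod_real _ _ _ hs.le (fun i hi => (h i (Finset.mem_of_mem_erase hi)).le)
  calc s ^ (U.erase u).card * s < s ^ (U.erase u).card * f u :=
        mul_lt_mul_of_pos_left (h u hu) (by positivity)
    _ ≤ (∏ i ∈ U.erase u, f i) * f u :=
        mul_le_mul_of_nonneg_right h1 (le_trans hs.le (h u hu).le)

lemma prod_lt_pow_card_real (U : Finset ι) (hU : U.Nonempty) (f : ι → ℝ) (s : ℝ)
    (h0 : ∀ i ∈ U, 0 ≤ f i) (h : ∀ i ∈ U, f i < s) :
    ∏ i ∈ U, f i < s ^ U.card := by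
  classical
  obtain ⟨u, hu⟩ := hU
  have hs0 : 0 < s := lt_of_le_of_lt (h0 u hu) (h u hu)
  rw [← Finset.prod_erase_mul U f hu, ← Finset.card_erase_add_one hu, pow_succ]
  have h1 : ∏ i ∈ U.erase u, f i ≤ s ^ (U.erase u).card :=
    prod_le_pow_card_real _ _ _ (fun i hi => h0 i (Finset.mem_of_mem_erase hi))
      (fun i hi => (h i (Finset.mem_of_mem_erase hi)).le)
  calc (∏ i ∈ U.erase u, f i) * f u ≤ s ^ (U.erase u).card * f u := by
        apply mul_le_mul_of_nonneg_right h1 (h0 u hu)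
    _ < s ^ (U.erase u).card * s := by
        apply mul_lt_mul_of_pos_left (h u hu) (by positivity)
end ProdHelpers
open Finset

section DomHelpers
variable {A : Type*} [CommRing A] {ι : Type*} [Nonempty ι]

lemma seminorm_sum_eq_of_strict_max (x : MulRingSeminorm A) (hx : IsNonarchimedean ⇑x)
    (S : Finset ι) (f : ι → A) (i₀ : ι) (hi₀ : i₀ ∈ S)
    (h : ∀ i ∈ S, i ≠ i₀ → x (f i) < x (f i₀)) :
    x (∑ i ∈ S, f i) = x (f i₀) := by
  classical
  rw [← Finset.add_sum_erase S f hi₀]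
  rcases (S.erase i₀).eq_empty_or_nonempty with he | hne
  · rw [he]; simp
  · obtain ⟨b, hb, hble⟩ := IsNonarchimedean.finset_image_add_of_nonempty (f := x) hx f hne
    have hblt : x (∑ i ∈ S.erase i₀, f i) < x (f i₀) :=
      lt_of_le_of_lt hble (h b (Finset.mem_of_mem_erase hb) (Finset.ne_of_mem_erase hb))
    rw [IsNonarchimedean.add_eq_max_of_ne hx (ne_of_gt hblt)]
    exact max_eq_left hblt.le
end DomHelpers
open Finset Polynomial

section Sigma
variable {A G : Type*} [CommRing A] [Group G] [Fintype G] [MulSemiringAction G A]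

/-- the `j`-th elementary symmetric function of the orbit of `a`. -/
noncomputable def orbSigma (G : Type*) [Group G] [Fintype G] [MulSemiringAction G A] (j : ℕ) (a : A) : A :=
  ∑ T ∈ (univ : Finset G).powersetCard j, ∏ g ∈ T, g • a

lemma orbSigma_eq_esymm (j : ℕ) (a : A) :
    orbSigma G j a = ((univ : Finset G).val.map (fun g : G => g • a)).esymm j :=
  (Finset.esymm_map_val (fun g : G => g • a) univ j).symm

lemma smul_orbSigma (h : G) (j : ℕ) (a : A) : h • orbSigma G j a = orbSigma G j a := by
  classical
  have hmap : ∀ (T : Finset G), (MulSemiringAction.toRingHom G A h) (∏ g ∈ T, g • a)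
      = ∏ g ∈ T, (h * g) • a := by
    intro T
    rw [map_prod]
    exact Finset.prod_congr rfl fun g _ => by
      show h • (g • a) = (h * g) • a
      rw [mul_smul]
  have : h • orbSigma G j a = (MulSemiringAction.toRingHom G A h) (orbSigma G j a) := rfl
  rw [this, orbSigma, map_sum]
  have h2 : ∀ T ∈ (univ : Finset G).powersetCard j,
      (MulSemiringAction.toRingHom G A h) (∏ g ∈ T, g • a)
        = ∏ g ∈ T.map (Equiv.mulLeft h).toEmbedding, g • a := by
    intro T _
    rw [hmap, Finset.prod_map]
    rfl
  rw [Finset.sum_congr rfl h2]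
  -- reindex
  have h3 : (univ : Finset G).powersetCard j
      = ((univ : Finset G).powersetCard j).map ((Finset.mapEmbedding (Equiv.mulLeft h).toEmbedding).toEmbedding) := by
    conv_lhs => rw [show (univ : Finset G) = univ.map (Equiv.mulLeft h).toEmbedding from (Finset.map_univ_equiv _).symm]
    rw [Finset.powersetCard_map]
  calc ∑ T ∈ (univ : Finset G).powersetCard j, ∏ g ∈ T.map (Equiv.mulLeft h).toEmbedding, g • a
      = ∑ T ∈ ((univ : Finset G).powersetCard j).map
          ((Finset.mapEmbedding (Equiv.mulLeft h).toEmbedding).toEmbedding), ∏ g ∈ T, g • a := by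
        rw [Finset.sum_map]
        apply Finset.sum_congr rfl
        intro T _
        rfl
    _ = orbSigma G j a := by rw [← h3]; rfl
end Sigma

section Vieta
variable {A G : Type*} [CommRing A] [Nontrivial A] [Group G] [Fintype G] [MulSemiringAction G A]

lemma orb_vieta (a : A) :
    ∑ c ∈ range (Fintype.card G + 1),
      ((-1 : A) ^ (Fintype.card G - c) * orbSigma G (Fintype.card G - c) a) * a ^ c = 0 := by
  classical
  set n := Fintype.card G with hn
  set M : Multiset A := (univ : Finset G).val.map (fun g : G => g • a) with hM
  have hMcard : Multiset.card M = n := by simp [hM, hn]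
  set P : Polynomial A := (M.map (fun r => Polynomial.X - Polynomial.C r)).prod with hP
  have hdeg : P.natDegree < n + 1 := by
    have h1 : P.natDegree ≤ ((M.map (fun r => Polynomial.X - Polynomial.C r)).map Polynomial.natDegree).sum :=
      Polynomial.natDegree_multiset_prod_le _
    rw [Multiset.map_map] at h1
    have h2 : ((M.map (Polynomial.natDegree ∘ fun r => Polynomial.X - Polynomial.C r))).sum
        = Multiset.card M := by
      rw [show (Polynomial.natDegree ∘ fun r : A => Polynomial.X - Polynomial.C r) = fun _ => 1 by
        funext r; simp [Polynomial.natDegree_X_sub_C]]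
      simp [Multiset.sum_replicate]
    omega
  have heval : P.eval a = 0 := by
    rw [hP, Polynomial.eval_multiset_prod, Multiset.map_map]
    apply Multiset.prod_eq_zero
    have : (0 : A) = (Polynomial.eval a ∘ fun r => Polynomial.X - Polynomial.C r) ((1 : G) • a) := by
      simp
    rw [this]
    exact Multiset.mem_map_of_mem _ (by simp only [hM, Multiset.mem_map]; exact ⟨1, by simp, rfl⟩)
  have hsum := Polynomial.eval_eq_sum_range' hdeg a
  rw [heval] at hsum
  have hcoeff : ∀ c ∈ range (n + 1),
      P.coeff c * a ^ c = ((-1 : A) ^ (n - c) * orbSigma G (n - c) a) * a ^ c := by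
    intro c hc
    rw [mem_range] at hc
    congr 1
    rw [hP, Multiset.prod_X_sub_C_coeff M (by omega : c ≤ Multiset.card M), hMcard]
    congr 1
    rw [orbSigma_eq_esymm]
  rw [Finset.sum_congr rfl hcoeff] at hsum
  exact hsum.symm
end Vieta

section BigLemma
variable {A G : Type*} [CommRing A] [Group G] [Fintype G] [MulSemiringAction G A]

lemma exists_smul_eq_val
    (x x' : MulRingSeminorm A) (hxna : IsNonarchimedean ⇑x) (hx'na : IsNonarchimedean ⇑x')
    (hagree : ∀ a : A, (∀ g : G, g • a = a) → x a = x' a) (a : A) :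
    ∃ g : G, x' a = x (g • a) := by
  classical
  have hnt : Nontrivial A := by
    refine ⟨0, 1, fun h => ?_⟩
    have h0 := map_zero x
    have h1 := map_one x
    rw [← h, h0] at h1
    norm_num at h1
  by_contra hcon
  push_neg at hcon
  set n := Fintype.card G with hn
  have hσ : ∀ j, x (orbSigma G j a) = x' (orbSigma G j a) := fun j =>
    hagree _ (fun h => smul_orbSigma h j a)
  set s := x' a with hs
  set r : G → ℝ := fun g => x (g • a) with hr
  have hne : ∀ g, r g ≠ s := fun g h => (hcon g) h.symm
  have hprodT : ∀ (T : Finset G), x (∏ g ∈ T, g • a) = ∏ g ∈ T, r g := fun T =>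
    map_prod x _ T
  rcases eq_or_lt_of_le (apply_nonneg x' a) with hs0 | hs0
  · -- case s = 0
    have hσn : orbSigma G n a = ∏ g ∈ (univ : Finset G), g • a := by
      rw [orbSigma, hn, ← Finset.card_univ, Finset.powersetCard_self]
      simp
    have h1 : x' (orbSigma G n a) = 0 := by
      rw [hσn, map_prod]
      apply Finset.prod_eq_zero (Finset.mem_univ (1 : G))
      simp [← hs0, ← hs]
    have h2 : ∏ g ∈ (univ : Finset G), r g = 0 := by
      have h3 := hσ n
      rw [h1] at h3
      rw [← hprodT, ← hσn]
      exact h3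
    obtain ⟨g, _, hg⟩ := Finset.prod_eq_zero_iff.mp h2
    exact hne g (by rw [hg]; exact hs0.trans hs.symm)
  · -- case s > 0
    set Sbig := (univ : Finset G).filter (fun g => s < r g) with hSb
    set k := Sbig.card with hk
    have hkn : k ≤ n := by
      rw [hk, hn, ← Finset.card_univ]
      exact Finset.card_filter_le _ _
    set P := ∏ g ∈ Sbig, r g with hPd
    have hrpos : ∀ g ∈ Sbig, 0 < r g := fun g hg =>
      lt_trans hs0 (Finset.mem_filter.mp hg).2
    have hrbig : ∀ g ∈ Sbig, s < r g := fun g hg => (Finset.mem_filter.mp hg).2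
    have hPpos : 0 < P := Finset.prod_pos hrpos
    have hout : ∀ g, g ∉ Sbig → r g < s := by
      intro g hg
      have : ¬ (s < r g) := fun hlt => hg (Finset.mem_filter.mpr ⟨Finset.mem_univ g, hlt⟩)
      exact lt_of_le_of_ne (not_lt.mp this) (hne g)
  -- combinatorial core bound
    have hTbound : ∀ (j : ℕ) (T : Finset G), T.card = j → j ≤ n → ¬(j = k ∧ T = Sbig) →
        (∏ g ∈ T, r g) * s ^ (n - j) < P * s ^ (n - k) := by
      intro j T hTc hjn hne'
      set i := (T ∩ Sbig).card with hi
      have hij : i ≤ j := by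
        rw [hi, ← hTc]
        exact Finset.card_le_card Finset.inter_subset_left
      have hik : i ≤ k := by
        rw [hi, hk]
        exact Finset.card_le_card Finset.inter_subset_right
      have hcardT : i + (T \ Sbig).card = j := by
        rw [hi, ← hTc]
        exact Finset.card_inter_add_card_sdiff T Sbig
      have hcardP : i + (Sbig \ T).card = k := by
        rw [hi, hk, Finset.inter_comm]
        exact Finset.card_inter_add_card_sdiff Sbig T
      have hsplitT : ∏ g ∈ T, r g = (∏ g ∈ T ∩ Sbig, r g) * ∏ g ∈ T \ Sbig, r g :=
        (Finset.prod_inter_mul_prod_diff T Sbig r).symm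
      have hsplitP : P = (∏ g ∈ T ∩ Sbig, r g) * ∏ g ∈ Sbig \ T, r g := by
        rw [hPd, ← Finset.prod_inter_mul_prod_diff Sbig T r, Finset.inter_comm]
      have hinterpos : 0 < ∏ g ∈ T ∩ Sbig, r g :=
        Finset.prod_pos (fun g hg => hrpos g (Finset.mem_inter.mp hg).2)
      have hQ1 : ∏ g ∈ T \ Sbig, r g ≤ s ^ (j - i) := by
        have := prod_le_pow_card_real (T \ Sbig) r s
          (fun g _ => apply_nonneg x _) (fun g hg => (hout g (Finset.mem_sdiff.mp hg).2).le)
        rwa [show (T \ Sbig).card = j - i by omega] at this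
      by_cases hik' : i < k
      · -- case i < k
        have hQ2 : s ^ (k - i) < ∏ g ∈ Sbig \ T, r g := by
          have hne2 : (Sbig \ T).Nonempty := by
            rw [← Finset.card_pos]
            omega
          have := pow_card_lt_prod_real (Sbig \ T) hne2 r s hs0
            (fun g hg => hrbig g (Finset.mem_sdiff.mp hg).1)
          rwa [show (Sbig \ T).card = k - i by omega] at this
        calc (∏ g ∈ T, r g) * s ^ (n - j)
            ≤ ((∏ g ∈ T ∩ Sbig, r g) * s ^ (j - i)) * s ^ (n - j) := by
              rw [hsplitT]
              have := mul_le_mul_of_nonneg_left hQ1 hinterpos.le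
              apply mul_le_mul_of_nonneg_right this (by positivity)
          _ = ((∏ g ∈ T ∩ Sbig, r g) * s ^ (k - i)) * s ^ (n - k) := by
              rw [mul_assoc, mul_assoc, ← pow_add, ← pow_add]
              congr 2
              omega
          _ < ((∏ g ∈ T ∩ Sbig, r g) * (∏ g ∈ Sbig \ T, r g)) * s ^ (n - k) := by
              apply mul_lt_mul_of_pos_right _ (by positivity)
              exact mul_lt_mul_of_pos_left hQ2 hinterpos
          _ = P * s ^ (n - k) := by rw [← hsplitP]
      · -- case i = k
        have hieq : i = k := le_antisymm hik (not_lt.mp hik')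
        have hTSb : T ∩ Sbig = Sbig := by
          apply Finset.eq_of_subset_of_card_le Finset.inter_subset_right
          omega
        have hjk : k < j := by
          rcases lt_or_eq_of_le (show k ≤ j by omega) with h | h
          · exact h
          · exfalso
            apply hne'
            refine ⟨h.symm, ?_⟩
            have hTT : T ∩ Sbig = T :=
              Finset.eq_of_subset_of_card_le Finset.inter_subset_left (by omega)
            exact hTT.symm.trans hTSb
        have hQ3 : ∏ g ∈ T \ Sbig, r g < s ^ (j - k) := by
          have hne3 : (T \ Sbig).Nonempty := by
            rw [← Finset.card_pos]
            omega
          have := prod_lt_pow_card_real (T \ Sbig) hne3 r s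
            (fun g _ => apply_nonneg x _) (fun g hg => hout g (Finset.mem_sdiff.mp hg).2)
          rwa [show (T \ Sbig).card = j - k by omega] at this
        calc (∏ g ∈ T, r g) * s ^ (n - j)
            = (P * ∏ g ∈ T \ Sbig, r g) * s ^ (n - j) := by
              rw [hsplitT, hTSb, hPd]
          _ < (P * s ^ (j - k)) * s ^ (n - j) := by
              apply mul_lt_mul_of_pos_right _ (by positivity)
              exact mul_lt_mul_of_pos_left hQ3 hPpos
          _ = P * s ^ (n - k) := by
              rw [mul_assoc, ← pow_add]
              congr 2
              omega
    -- the dominant term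
    have hxσk : x (orbSigma G k a) = P := by
      have hmem : Sbig ∈ (univ : Finset G).powersetCard k :=
        Finset.mem_powersetCard_univ.mpr rfl
      have hdom := seminorm_sum_eq_of_strict_max x hxna ((univ : Finset G).powersetCard k)
        (fun T => ∏ g ∈ T, g • a) Sbig hmem ?_
      · rw [orbSigma, hdom, hprodT]
      · intro T hT hTne
        rw [hprodT, hprodT]
        have hTc : T.card = k := Finset.mem_powersetCard_univ.mp hT
        have := hTbound k T hTc hkn (fun h => hTne h.2)
        exact lt_of_mul_lt_mul_right this (by positivity)
    have hkey : x' (((-1:A)^(n-(n-k)) * orbSigma G (n-(n-k)) a) * a ^ (n-k)) = P * s ^ (n-k) := by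
      have hnk : n - (n - k) = k := by omega
      rw [hnk, map_mul, map_mul, map_pow, map_pow, map_neg_eq_map, map_one, one_pow, one_mul,
        ← hσ k, hxσk]
    -- other terms strictly smaller
    have hterm : ∀ c ∈ Finset.range (n+1), c ≠ n - k →
        x' (((-1:A)^(n-c) * orbSigma G (n-c) a) * a ^ c) < P * s ^ (n-k) := by
      intro c hc hcnk
      rw [Finset.mem_range] at hc
      set j := n - c with hj
      have hjn : j ≤ n := Nat.sub_le _ _
      have hjk : j ≠ k := by omega
      have hval : x' (((-1:A)^(n-c) * orbSigma G j a) * a ^ c) = x (orbSigma G j a) * s ^ c := by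
        rw [map_mul, map_mul, map_pow, map_pow, map_neg_eq_map, map_one, one_pow, one_mul, ← hσ j]
      rw [hval]
      obtain ⟨T, hT, hTle⟩ := IsNonarchimedean.finset_image_add (map_zero x) (apply_nonneg x) hxna
          (fun T : Finset G => ∏ g ∈ T, g • a) ((univ : Finset G).powersetCard j)
      have hpc : ((univ : Finset G).powersetCard j).Nonempty :=
        Finset.powersetCard_nonempty.mpr (by rw [Finset.card_univ]; exact hjn)
      have hTcard : T.card = j := Finset.mem_powersetCard_univ.mp (hT hpc)
      have h1 : x (orbSigma G j a) ≤ ∏ g ∈ T, r g := by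
        rw [← hprodT]
        exact hTle
      have h2 := hTbound j T hTcard hjn (fun h => hjk h.1)
      have hcj : n - j = c := by omega
      calc x (orbSigma G j a) * s ^ c ≤ (∏ g ∈ T, r g) * s ^ c :=
            mul_le_mul_of_nonneg_right h1 (by positivity)
        _ < P * s ^ (n - k) := by rw [← hcj]; exact h2
    -- final contradiction via the Vieta identity
    have hviet := orb_vieta (G := G) a
    have hdom2 := seminorm_sum_eq_of_strict_max x' hx'na (Finset.range (n+1))
      (fun c => ((-1:A)^(n-c) * orbSigma G (n-c) a) * a ^ c) (n - k)
      (Finset.mem_range.mpr (by omega)) ?_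
    · rw [hviet, map_zero, hkey] at hdom2
      have : 0 < P * s ^ (n - k) := by positivity
      linarith
    · intro c hc hcne
      rw [hkey]
      exact hterm c hc hcne
end BigLemma

section Kernels
variable {A : Type*} [CommRing A]

/-- The kernel of a multiplicative ring seminorm, as an ideal. -/
def seminormKer (y : MulRingSeminorm A) : Ideal A where
  carrier := {b | y b = 0}
  add_mem' {b c} hb hc := by
    simp only [Set.mem_setOf_eq] at *
    refine le_antisymm ?_ (apply_nonneg y _)
    calc y (b + c) ≤ y b + y c := map_add_le_add y b c
      _ = 0 := by rw [hb, hc, add_zero]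
  zero_mem' := map_zero y
  smul_mem' c b hb := by
    simp only [Set.mem_setOf_eq, smul_eq_mul, map_mul] at *
    rw [hb, mul_zero]

@[simp] lemma mem_seminormKer {y : MulRingSeminorm A} {b : A} :
    b ∈ seminormKer y ↔ y b = 0 := Iff.rfl

lemma seminormKer_isPrime (y : MulRingSeminorm A) : (seminormKer y).IsPrime := by
  constructor
  · intro h
    have : (1 : A) ∈ seminormKer y := h ▸ Submodule.mem_top
    rw [mem_seminormKer, map_one] at this
    norm_num at this
  · intro b c hbc
    rw [mem_seminormKer, map_mul] at hbc
    rcases mul_eq_zero.mp hbc with h | h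
    · exact Or.inl h
    · exact Or.inr h

variable {G : Type*} [Group G] [MulSemiringAction G A]

/-- Precomposition of a multiplicative seminorm with the action of `g`. -/
def MulRingSeminorm.compSmul (x : MulRingSeminorm A) (g : G) : MulRingSeminorm A where
  toFun b := x (g • b)
  map_zero' := by show x (g • (0:A)) = 0; rw [smul_zero, map_zero]
  add_le' b c := by show x (g • (b + c)) ≤ x (g • b) + x (g • c); rw [smul_add]; exact map_add_le_add x _ _
  neg' b := by show x (g • (-b)) = x (g • b); rw [smul_neg]; exact map_neg_eq_map x _
  map_one' := by show x (g • (1:A)) = 1; rw [smul_one]; exact map_one x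
  map_mul' b c := by show x (g • (b * c)) = x (g • b) * x (g • c); rw [smul_mul']; exact map_mul x _ _

@[simp] lemma MulRingSeminorm.compSmul_apply (x : MulRingSeminorm A) (g : G) (b : A) :
    x.compSmul g b = x (g • b) := rfl

end Kernels

/-- Let `K` be a field complete with respect to a non-Archimedean norm, `A` a
finitely generated commutative `K`-algebra, and `G` a finite group acting on
`A` by `K`-algebra automorphisms.  If two multiplicative seminorms `x, x'` on
`A` extending the norm of `K` agree on all `G`-invariant elements, then they
differ by an element of `G`: there is `g ∈ G` with `x'(a) = x(g • a)` for all
`a`. -/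
theorem seminorms_agree_on_invariants_iff_in_same_orbit
    (K : Type*) [NormedField K] [CompleteSpace K]
    (hna : ∀ k k' : K, ‖k + k'‖ ≤ max ‖k‖ ‖k'‖)
    (A : Type*) [CommRing A] [Algebra K A] (hfg : Algebra.FiniteType K A)
    (G : Type*) [Group G] [Finite G] [MulSemiringAction G A]
    (hGK : ∀ (g : G) (k : K), g • (algebraMap K A k) = algebraMap K A k)
    (x x' : MulRingSeminorm A)
    (hx : ∀ k : K, x (algebraMap K A k) = ‖k‖)
    (hx' : ∀ k : K, x' (algebraMap K A k) = ‖k‖)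
    (hagree : ∀ a : A, (∀ g : G, g • a = a) → x a = x' a) :
    ∃ g : G, ∀ a : A, x' a = x (g • a) := by
  classical
  letI : Fintype G := Fintype.ofFinite G
  have hxna : IsNonarchimedean ⇑x := seminorm_isNonarchimedean hna x hx
  have hx'na : IsNonarchimedean ⇑x' := seminorm_isNonarchimedean hna x' hx'
  have hagree' : ∀ a : A, (∀ g : G, g • a = a) → x' a = x a := fun a h => (hagree a h).symm
  have Bweak : ∀ a : A, ∃ g : G, x' a = x (g • a) := fun a =>
    exists_smul_eq_val x x' hxna hx'na hagree a
  have Bweak' : ∀ a : A, ∃ g : G, x a = x' (g • a) := fun a =>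
    exists_smul_eq_val x' x hx'na hxna hagree' a
  by_contra hcon
  push_neg at hcon
  -- kernels
  set p : Ideal A := seminormKer x' with hp
  set q : G → Ideal A := fun g => seminormKer (x.compSmul g) with hq
  set q' : G → Ideal A := fun g => seminormKer (x'.compSmul g) with hq'
  have hpprime : p.IsPrime := seminormKer_isPrime x'
  have hqprime : ∀ g, (q g).IsPrime := fun g => seminormKer_isPrime _
  -- Claim 1 : some q g₀ contains p
  obtain ⟨g₀, -, hle₀⟩ : ∃ g ∈ (Finset.univ : Finset G), p ≤ q g := by
    rw [← Ideal.subset_union_prime (1 : G) 1 (fun i _ _ _ => hqprime i)]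
    intro b hb
    obtain ⟨g, hg⟩ := Bweak b
    have : x (g • b) = 0 := by rw [← hg]; exact hb
    exact Set.mem_biUnion (Finset.mem_coe.mpr (Finset.mem_univ g)) this
  -- Claim 2 : some q' h₀ contains the kernel of x
  obtain ⟨h₀, -, hle₂⟩ : ∃ h ∈ (Finset.univ : Finset G), seminormKer x ≤ q' h := by
    rw [← Ideal.subset_union_prime (1 : G) 1 (fun i _ _ _ => seminormKer_isPrime _)]
    intro b hb
    obtain ⟨g, hg⟩ := Bweak' b
    have : x' (g • b) = 0 := by rw [← hg]; exact hb
    exact Set.mem_biUnion (Finset.mem_coe.mpr (Finset.mem_univ g)) this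
  have hle₀' : ∀ b : A, x' b = 0 → x (g₀ • b) = 0 := fun b hb => hle₀ hb
  have hle₂' : ∀ b : A, x b = 0 → x' (h₀ • b) = 0 := fun b hb => hle₂ hb
  -- the cycling argument
  set σ : G := h₀ * g₀ with hσdef
  have hσmap : ∀ b : A, x' b = 0 → x' (σ • b) = 0 := by
    intro b hb
    have h2 := hle₂' _ (hle₀' b hb)
    rwa [← mul_smul] at h2
  have hiter : ∀ (N : ℕ) (b : A), x' b = 0 → x' ((σ ^ N) • b) = 0 := by
    intro N
    induction N with
    | zero => intro b hb; rwa [pow_zero, one_smul]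
    | succ N ih =>
      intro b hb
      rw [pow_succ, mul_smul]
      exact ih _ (hσmap b hb)
  have hrev : ∀ b : A, x' (σ • b) = 0 → x' b = 0 := by
    intro b hb
    have hN := orderOf_pos σ
    have := hiter (orderOf σ - 1) (σ • b) hb
    rwa [← mul_smul, ← pow_succ, Nat.sub_add_cancel hN, pow_orderOf_eq_one, one_smul] at this
  have hg₀iff : ∀ b : A, x' b = 0 ↔ x (g₀ • b) = 0 := by
    intro b
    refine ⟨hle₀' b, fun hb => ?_⟩
    apply hrev
    rw [hσdef, mul_smul]
    exact hle₂' _ hb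
  -- the set of "good" group elements
  set T : Finset G := Finset.univ.filter (fun g => ∀ b : A, x' b = 0 ↔ x (g • b) = 0) with hT
  have hg₀T : g₀ ∈ T := Finset.mem_filter.mpr ⟨Finset.mem_univ _, hg₀iff⟩
  have hTiff : ∀ g ∈ T, ∀ b : A, x' b = 0 ↔ x (g • b) = 0 := fun g hg =>
    (Finset.mem_filter.mp hg).2
  -- for g ∉ T, the kernel q g is not contained in p
  have hnotle : ∀ g ∉ T, ¬ (q g ≤ p) := by
    intro g hgT hle
    apply hgT
    rw [hT, Finset.mem_filter]
    refine ⟨Finset.mem_univ _, ?_⟩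
    have hle' : ∀ b : A, x (g • b) = 0 → x' b = 0 := fun b hb => hle hb
    set ρ : G := g₀ * g⁻¹ with hρ
    have hΦ : ∀ b : A, x b = 0 → x (ρ • b) = 0 := by
      intro b hb
      have h1 : x (g • (g⁻¹ • b)) = 0 := by rwa [smul_inv_smul]
      have h3 : x (g₀ • (g⁻¹ • b)) = 0 := (hg₀iff _).mp (hle' _ h1)
      rwa [← mul_smul] at h3
    have hΦiter : ∀ (N : ℕ) (b : A), x b = 0 → x ((ρ ^ N) • b) = 0 := by
      intro N
      induction N with
      | zero => intro b hb; rwa [pow_zero, one_smul]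
      | succ N ih =>
        intro b hb
        rw [pow_succ, mul_smul]
        exact ih _ (hΦ b hb)
    have hΦrev : ∀ b : A, x (ρ • b) = 0 → x b = 0 := by
      intro b hb
      have hN := orderOf_pos ρ
      have := hΦiter (orderOf ρ - 1) (ρ • b) hb
      rwa [← mul_smul, ← pow_succ, Nat.sub_add_cancel hN, pow_orderOf_eq_one, one_smul] at this
    intro b
    refine ⟨fun hb => ?_, fun hb => hle' b hb⟩
    apply hΦrev
    have h4 : ρ • (g • b) = g₀ • b := by rw [hρ, mul_smul, inv_smul_smul]
    rw [h4]
    exact (hg₀iff b).mp hb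
  -- pick z in all the "incomparable" kernels but not in p
  set Tc : Finset G := Finset.univ \ T with hTc
  have hzx : ¬ (Tc.inf q ≤ p) := by
    intro hle
    obtain ⟨g, hgTc, hgle⟩ := (Ideal.IsPrime.inf_le' hpprime).mp hle
    exact hnotle g (Finset.mem_sdiff.mp hgTc).2 hgle
  obtain ⟨z, hzmem, hznp⟩ := SetLike.not_le_iff_exists.mp hzx
  have hz0 : x' z ≠ 0 := hznp
  have hzq : ∀ g ∉ T, x (g • z) = 0 := by
    intro g hg
    have : Tc.inf q ≤ q g := Finset.inf_le (Finset.mem_sdiff.mpr ⟨Finset.mem_univ _, hg⟩)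
    exact this hzmem
  -- witnesses
  set w : G → A := fun g => (hcon g).choose with hw
  have hwspec : ∀ g : G, x' (w g) ≠ x (g • w g) := fun g => (hcon g).choose_spec
  have hTpos : ∀ g ∈ T, ∀ b : A, x' b ≠ 0 → x (g • b) ≠ 0 := fun g hg b hb h0 =>
    hb (((hTiff g hg) b).mpr h0)
  have hwpos : ∀ g ∈ T, x' (w g) ≠ 0 := by
    intro g hg h0
    exact hwspec g (by rw [h0, ((hTiff g hg) (w g)).mp h0])
  -- index function for exponents
  set t : ℕ := T.card with ht
  set idx : G → ℕ := fun g => if hg : g ∈ T then ((T.equivFin ⟨g, hg⟩ : Fin t) : ℕ) + 1 else 0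
    with hidx
  have hidxpos : ∀ g ∈ T, 1 ≤ idx g := by
    intro g hg
    simp only [hidx, dif_pos hg]
    omega
  have hidxinj : ∀ g ∈ T, ∀ h ∈ T, idx g = idx h → g = h := by
    intro g hg h hh hgh
    simp only [hidx, dif_pos hg, dif_pos hh, add_left_inj] at hgh
    have h1 : (T.equivFin ⟨g, hg⟩ : Fin t) = T.equivFin ⟨h, hh⟩ := Fin.ext hgh
    have h2 := T.equivFin.injective h1
    exact congrArg Subtype.val h2
  -- the coefficients
  set cz : G → ℝ := fun g => Real.log (x (g • z)) - Real.log (x' z) with hcz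
  set ca : G → G → ℝ := fun g h => Real.log (x (g • w h)) - Real.log (x' (w h)) with hca
  set L : G → Polynomial ℝ := fun g =>
    Polynomial.C (cz g) + ∑ h ∈ T, Polynomial.C (ca g h) * Polynomial.X ^ (idx h) with hL
  have hcagg : ∀ g ∈ T, ca g g ≠ 0 := by
    intro g hg h0
    have hbpos : 0 < x' (w g) := lt_of_le_of_ne (apply_nonneg _ _) (Ne.symm (hwpos g hg))
    have hgpos : 0 < x (g • w g) :=
      lt_of_le_of_ne (apply_nonneg _ _) (Ne.symm (hTpos g hg _ (hwpos g hg)))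
    have h1 : Real.log (x (g • w g)) = Real.log (x' (w g)) := by
      have h0' : Real.log (x (g • w g)) - Real.log (x' (w g)) = 0 := h0
      exact sub_eq_zero.mp h0'
    have h2 : x (g • w g) = x' (w g) := by
      have := congrArg Real.exp h1
      rwa [Real.exp_log hgpos, Real.exp_log hbpos] at this
    exact hwspec g h2.symm
  have hL0 : ∀ g ∈ T, L g ≠ 0 := by
    intro g hg hLeq
    have hcoeff : (L g).coeff (idx g) = ca g g := by
      rw [hL]
      simp only [Polynomial.coeff_add, Polynomial.finset_sum_coeff]
      rw [Polynomial.coeff_C, if_neg (by have := hidxpos g hg; omega)]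
      rw [zero_add]
      have hterms : ∀ h ∈ T, (Polynomial.C (ca g h) * Polynomial.X ^ (idx h)).coeff (idx g)
          = if h = g then ca g g else 0 := by
        intro h hh
        rw [Polynomial.coeff_C_mul, Polynomial.coeff_X_pow]
        by_cases hhg : h = g
        · subst hhg
          rw [if_pos rfl, if_pos rfl, mul_one]
        · rw [if_neg (fun hix => hhg (hidxinj h hh g hg hix.symm)), mul_zero, if_neg hhg]
      rw [Finset.sum_congr rfl hterms, Finset.sum_ite_eq' T g (fun _ => ca g g), if_pos hg]
    rw [hLeq, Polynomial.coeff_zero] at hcoeff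
    exact hcagg g hg hcoeff.symm
  -- pick a natural number avoiding all the roots
  have hfin : (⋃ g ∈ (T : Set G), {y : ℝ | (L g).IsRoot y}).Finite :=
    Set.Finite.biUnion T.finite_toSet (fun g hg => Polynomial.finite_setOf_isRoot (hL0 g hg))
  have hinf : (Set.range ((↑·) : ℕ → ℝ)).Infinite :=
    Set.infinite_range_of_injective Nat.cast_injective
  obtain ⟨y, ⟨m, rfl⟩, hynot⟩ := hinf.exists_notMem_finite hfin
  have hm : ∀ g ∈ T, (L g).eval (m : ℝ) ≠ 0 := by
    intro g hg h0
    exact hynot (Set.mem_biUnion hg h0)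
  -- the magic element
  set c : A := z * ∏ h ∈ T, w h ^ (m ^ idx h) with hc
  have hx'c : x' c = x' z * ∏ h ∈ T, x' (w h) ^ (m ^ idx h) := by
    rw [hc, map_mul, map_prod]
    congr 1
    exact Finset.prod_congr rfl fun h _ => map_pow x' _ _
  have hx'cpos : 0 < x' c := by
    rw [hx'c]
    apply mul_pos (lt_of_le_of_ne (apply_nonneg _ _) (Ne.symm hz0))
    apply Finset.prod_pos
    intro h hh
    exact pow_pos (lt_of_le_of_ne (apply_nonneg _ _) (Ne.symm (hwpos h hh))) _
  have hxgc : ∀ g : G, x (g • c) = x (g • z) * ∏ h ∈ T, x (g • w h) ^ (m ^ idx h) := by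
    intro g
    have hgsmul : g • c = (g • z) * ∏ h ∈ T, (g • w h) ^ (m ^ idx h) := by
      rw [hc, smul_mul']
      congr 1
      show (MulSemiringAction.toRingHom G A g) (∏ h ∈ T, w h ^ m ^ idx h) = _
      rw [map_prod]
      exact Finset.prod_congr rfl fun h _ => by rw [map_pow]; rfl
    rw [hgsmul, map_mul, map_prod]
    congr 1
    exact Finset.prod_congr rfl fun h _ => map_pow x _ _
  -- the contradiction
  obtain ⟨g, hg⟩ := Bweak c
  by_cases hgT : g ∈ T
  · -- log computation
    have hlogc : Real.log (x' c) = Real.log (x' z)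
        + ∑ h ∈ T, ((m : ℝ) ^ idx h) * Real.log (x' (w h)) := by
      rw [hx'c, Real.log_mul hz0 ?h2, Real.log_prod]
      · congr 1
        refine Finset.sum_congr rfl fun h hh => ?_
        rw [Real.log_pow]
        push_cast
        ring
      · intro h hh
        exact pow_ne_zero _ (hwpos h hh)
      case h2 =>
        apply Finset.prod_ne_zero_iff.mpr
        intro h hh
        exact pow_ne_zero _ (hwpos h hh)
    have hloggc : Real.log (x (g • c)) = Real.log (x (g • z))
        + ∑ h ∈ T, ((m : ℝ) ^ idx h) * Real.log (x (g • w h)) := by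
      rw [hxgc g, Real.log_mul (hTpos g hgT z hz0) ?h2, Real.log_prod]
      · congr 1
        refine Finset.sum_congr rfl fun h hh => ?_
        rw [Real.log_pow]
        push_cast
        ring
      · intro h hh
        exact pow_ne_zero _ (hTpos g hgT _ (hwpos h hh))
      case h2 =>
        apply Finset.prod_ne_zero_iff.mpr
        intro h hh
        exact pow_ne_zero _ (hTpos g hgT _ (hwpos h hh))
    have hsum : ∑ h ∈ T, (ca g h) * (m:ℝ) ^ idx h
        = (∑ h ∈ T, (m:ℝ) ^ idx h * Real.log (x (g • w h)))
          - ∑ h ∈ T, (m:ℝ) ^ idx h * Real.log (x' (w h)) := by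
      rw [← Finset.sum_sub_distrib]
      refine Finset.sum_congr rfl fun h hh => ?_
      show (Real.log (x (g • w h)) - Real.log (x' (w h))) * (m:ℝ) ^ idx h = _
      ring
    have heval : (L g).eval (m : ℝ)
        = Real.log (x (g • c)) - Real.log (x' c) := by
      rw [hL]
      simp only [Polynomial.eval_add, Polynomial.eval_C, Polynomial.eval_finset_sum,
        Polynomial.eval_mul, Polynomial.eval_pow, Polynomial.eval_X]
      rw [hsum, hlogc, hloggc]
      show cz g + _ = _
      rw [hcz]
      ring
    rw [← hg] at heval
    rw [sub_self] at heval
    exact hm g hgT heval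
  · have : x (g • c) = 0 := by
      rw [hxgc g, hzq g hgT, zero_mul]
    rw [this] at hg
    exact (ne_of_gt hx'cpos) hg
end

section
/- Let P be any Sylow 2-subgroup of the group GL₃(𝔽₂) of invertible 3×3 matrices over the field with two elements. Then the natural action of P on the set of 7 nonzero vectors of 𝔽₂³ has exactly three orbits, of cardinalities 1, 2 and 4. -/
open Matrix

/-- The orbit of a vector `v ∈ 𝔽₂³` under a subgroup `P ≤ GL₃(𝔽₂)`, acting by
matrix-vector multiplication. -/
def glOrbit (P : Subgroup (GL (Fin 3) (ZMod 2))) (v : Fin 3 → ZMod 2) :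
    Set (Fin 3 → ZMod 2) :=
  {w | ∃ g ∈ P, (g : Matrix (Fin 3) (Fin 3) (ZMod 2)) *ᵥ v = w}

namespace SylowOrbitsAux

abbrev MM := Matrix (Fin 3) (Fin 3) (ZMod 2)

/-- The subgroup of upper unitriangular matrices in `GL₃(𝔽₂)`. -/
def P0 : Subgroup (GL (Fin 3) (ZMod 2)) where
  carrier := {g | (g : MM) 0 0 = 1 ∧ (g : MM) 1 1 = 1 ∧ (g : MM) 2 2 = 1 ∧
    (g : MM) 1 0 = 0 ∧ (g : MM) 2 0 = 0 ∧ (g : MM) 2 1 = 0}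
  one_mem' := by simp [Matrix.one_apply]
  mul_mem' := by
    rintro a b ⟨a1,a2,a3,a4,a5,a6⟩ ⟨b1,b2,b3,b4,b5,b6⟩
    refine ⟨?_,?_,?_,?_,?_,?_⟩ <;>
      simp [Units.val_mul, Matrix.mul_apply, Fin.sum_univ_three,
        a1,a2,a3,a4,a5,a6,b1,b2,b3,b4,b5,b6]
  inv_mem' := by
    rintro g ⟨g1,g2,g3,g4,g5,g6⟩
    have h : ((g⁻¹ : GL (Fin 3) (ZMod 2)) : MM) * g = 1 := by
      rw [← Units.val_mul, inv_mul_cancel, Units.val_one]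
    set h' := ((g⁻¹ : GL (Fin 3) (ZMod 2)) : MM) with hh
    have e : ∀ i j, (h' * (g : MM)) i j = (1 : MM) i j := fun i j => by rw [h]
    have e20 : h' 2 0 = 0 := by
      have := e 2 0
      simpa [Matrix.mul_apply, Fin.sum_univ_three, Matrix.one_apply, g1,g4,g5] using this
    have e10 : h' 1 0 = 0 := by
      have := e 1 0
      simpa [Matrix.mul_apply, Fin.sum_univ_three, Matrix.one_apply, g1,g4,g5] using this
    have e00 : h' 0 0 = 1 := by
      have := e 0 0
      simpa [Matrix.mul_apply, Fin.sum_univ_three, Matrix.one_apply, g1,g4,g5] using this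
    have e21 : h' 2 1 = 0 := by
      have := e 2 1
      simpa [Matrix.mul_apply, Fin.sum_univ_three, Matrix.one_apply, g2,g6,e20] using this
    have e11 : h' 1 1 = 1 := by
      have := e 1 1
      simpa [Matrix.mul_apply, Fin.sum_univ_three, Matrix.one_apply, g2,g6,e10] using this
    have e22 : h' 2 2 = 1 := by
      have := e 2 2
      simpa [Matrix.mul_apply, Fin.sum_univ_three, Matrix.one_apply, g3,e20,e21] using this
    exact ⟨e00,e11,e22,e10,e20,e21⟩

lemma Ukey : ∀ a b c : ZMod 2,
    (!![1,a,b;0,1,c;0,0,1] : MM) * !![1,a,b+a*c;0,1,c;0,0,1] = 1 ∧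
    (!![1,a,b+a*c;0,1,c;0,0,1] : MM) * !![1,a,b;0,1,c;0,0,1] = 1 := by
  decide

/-- Explicit unitriangular invertible matrices. -/
def U (a b c : ZMod 2) : GL (Fin 3) (ZMod 2) :=
  ⟨!![1,a,b;0,1,c;0,0,1], !![1,a,b+a*c;0,1,c;0,0,1], (Ukey a b c).1, (Ukey a b c).2⟩

lemma U_mem (a b c : ZMod 2) : U a b c ∈ P0 :=
  ⟨rfl, rfl, rfl, rfl, rfl, rfl⟩

def P0equiv : P0 ≃ (ZMod 2 × ZMod 2 × ZMod 2) where
  toFun g := (((g : GL (Fin 3) (ZMod 2)) : MM) 0 1,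
    ((g : GL (Fin 3) (ZMod 2)) : MM) 0 2, ((g : GL (Fin 3) (ZMod 2)) : MM) 1 2)
  invFun x := ⟨U x.1 x.2.1 x.2.2, U_mem _ _ _⟩
  left_inv := by
    rintro ⟨g, g1,g2,g3,g4,g5,g6⟩
    apply Subtype.ext
    apply Units.ext
    show (U _ _ _ : MM) = (g : MM)
    ext i j
    fin_cases i <;> fin_cases j <;> simp_all [U, Matrix.vecHead, Matrix.vecTail]
  right_inv := by rintro ⟨a,b,c⟩; refine Prod.ext rfl (Prod.ext rfl rfl)

lemma card_P0 : Nat.card P0 = 8 := by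
  rw [Nat.card_congr P0equiv]
  simp [Nat.card_eq_fintype_card]

lemma mem_mulVec {g : GL (Fin 3) (ZMod 2)} (hg : g ∈ P0) (v : Fin 3 → ZMod 2) :
    (g : MM) *ᵥ v = ![v 0 + (g : MM) 0 1 * v 1 + (g : MM) 0 2 * v 2,
      v 1 + (g : MM) 1 2 * v 2, v 2] := by
  obtain ⟨g1,g2,g3,g4,g5,g6⟩ := hg
  funext i
  fin_cases i <;>
    simp [Matrix.mulVec, dotProduct, Fin.sum_univ_three, g1,g2,g3,g4,g5,g6]

lemma U_mulVec (a b c : ZMod 2) (v : Fin 3 → ZMod 2) :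
    (U a b c : MM) *ᵥ v = ![v 0 + a * v 1 + b * v 2, v 1 + c * v 2, v 2] := by
  rw [mem_mulVec (U_mem a b c)]; rfl

lemma self_mem_glOrbit (Q : Subgroup (GL (Fin 3) (ZMod 2))) (v : Fin 3 → ZMod 2) :
    v ∈ glOrbit Q v :=
  ⟨1, one_mem Q, by simp⟩

lemma GL_mulVec_mulVec (a b : GL (Fin 3) (ZMod 2)) (v : Fin 3 → ZMod 2) :
    (a : MM) *ᵥ ((b : MM) *ᵥ v) = ((a * b : GL (Fin 3) (ZMod 2)) : MM) *ᵥ v := by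
  rw [Matrix.mulVec_mulVec, Units.val_mul]

lemma GL_cancel (a : GL (Fin 3) (ZMod 2)) (v : Fin 3 → ZMod 2) :
    (a : MM) *ᵥ (((a⁻¹ : GL (Fin 3) (ZMod 2)) : MM) *ᵥ v) = v := by
  rw [GL_mulVec_mulVec, mul_inv_cancel, Units.val_one, Matrix.one_mulVec]

lemma GL_cancel' (a : GL (Fin 3) (ZMod 2)) (v : Fin 3 → ZMod 2) :
    ((a⁻¹ : GL (Fin 3) (ZMod 2)) : MM) *ᵥ ((a : MM) *ᵥ v) = v := by
  rw [GL_mulVec_mulVec, inv_mul_cancel, Units.val_one, Matrix.one_mulVec]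

lemma glOrbit_eq_of_mem {Q : Subgroup (GL (Fin 3) (ZMod 2))} {v w : Fin 3 → ZMod 2}
    (h : w ∈ glOrbit Q v) : glOrbit Q w = glOrbit Q v := by
  obtain ⟨g, hg, rfl⟩ := h
  ext u
  constructor
  · rintro ⟨k, hk, rfl⟩
    exact ⟨k * g, mul_mem hk hg, by rw [← GL_mulVec_mulVec]⟩
  · rintro ⟨k, hk, rfl⟩
    refine ⟨k * g⁻¹, mul_mem hk (inv_mem hg), ?_⟩
    rw [← GL_mulVec_mulVec, GL_cancel']

lemma orbit0 : glOrbit P0 ![1,0,0] = {![1,0,0]} := by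
  ext w
  constructor
  · rintro ⟨g, hg, rfl⟩
    rw [mem_mulVec hg]
    simp
  · rintro rfl
    exact self_mem_glOrbit _ _

lemma orbit1 : glOrbit P0 ![0,1,0] = {![0,1,0], ![1,1,0]} := by
  ext w
  constructor
  · rintro ⟨g, hg, rfl⟩
    rw [mem_mulVec hg]
    simp only [Set.mem_insert_iff, Set.mem_singleton_iff]
    rcases (by decide : ∀ x : ZMod 2, x = 0 ∨ x = 1) ((g : MM) 0 1) with h | h <;>
      rw [h] <;> [left; right] <;> funext i <;> fin_cases i <;> simp
  · rintro (rfl | rfl)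
    · exact self_mem_glOrbit _ _
    · exact ⟨U 1 0 0, U_mem _ _ _, by rw [U_mulVec]; funext i; fin_cases i <;> simp⟩

lemma orbit2 : glOrbit P0 ![0,0,1] = {w | w 2 = 1} := by
  ext w
  constructor
  · rintro ⟨g, hg, rfl⟩
    rw [mem_mulVec hg]
    simp
  · intro hw
    have hw' : w 2 = 1 := hw
    refine ⟨U 0 (w 0) (w 1), U_mem _ _ _, ?_⟩
    rw [U_mulVec]
    funext i
    fin_cases i <;> simp [hw']

lemma vec_eta (v : Fin 3 → ZMod 2) : v = ![v 0, v 1, v 2] := by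
  funext i; fin_cases i <;> simp

lemma zmod2_cases (x : ZMod 2) : x = 0 ∨ x = 1 := by
  have h : ∀ y : ZMod 2, y = 0 ∨ y = 1 := by decide
  exact h x

lemma P0_cover (v : Fin 3 → ZMod 2) (hv : v ≠ 0) :
    glOrbit P0 v = glOrbit P0 ![1,0,0] ∨
    glOrbit P0 v = glOrbit P0 ![0,1,0] ∨
    glOrbit P0 v = glOrbit P0 ![0,0,1] := by
  rcases zmod2_cases (v 2) with h2 | h2
  · rcases zmod2_cases (v 1) with h1 | h1
    · rcases zmod2_cases (v 0) with h0 | h0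
      · exfalso; apply hv; rw [vec_eta v, h0, h1, h2]
        funext i; fin_cases i <;> rfl
      · left
        have : v = ![1,0,0] := by rw [vec_eta v, h0, h1, h2]
        rw [this]
    · right; left
      apply glOrbit_eq_of_mem
      rw [orbit1]
      rcases zmod2_cases (v 0) with h0 | h0
      · have : v = ![0,1,0] := by rw [vec_eta v, h0, h1, h2]
        rw [this]; exact Set.mem_insert _ _
      · have : v = ![1,1,0] := by rw [vec_eta v, h0, h1, h2]
        rw [this]; exact Set.mem_insert_of_mem _ rfl
  · right; right
    apply glOrbit_eq_of_mem
    rw [orbit2]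
    exact h2

lemma orbit2_finset : ({w : Fin 3 → ZMod 2 | w 2 = 1} : Set _) =
    ↑(Finset.filter (fun w : Fin 3 → ZMod 2 => w 2 = 1) Finset.univ) := by
  ext w; simp

lemma ncard_orbit2 : ({w : Fin 3 → ZMod 2 | w 2 = 1} : Set _).ncard = 4 := by
  rw [orbit2_finset, Set.ncard_coe_finset]
  decide

end SylowOrbitsAux

open SylowOrbitsAux in
/-- A Sylow `2`-subgroup `P` of `GL₃(𝔽₂)` acts on the seven nonzero vectors of
`𝔽₂³` with exactly three orbits, of cardinalities `1`, `2` and `4`. -/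
theorem sylow_two_orbits_on_nonzero_vectors
    (P : Sylow 2 (GL (Fin 3) (ZMod 2))) :
    ∃ v₁ v₂ v₃ : Fin 3 → ZMod 2,
      v₁ ≠ 0 ∧ v₂ ≠ 0 ∧ v₃ ≠ 0 ∧
      glOrbit P.toSubgroup v₁ ≠ glOrbit P.toSubgroup v₂ ∧
      glOrbit P.toSubgroup v₁ ≠ glOrbit P.toSubgroup v₃ ∧
      glOrbit P.toSubgroup v₂ ≠ glOrbit P.toSubgroup v₃ ∧
      (∀ v : Fin 3 → ZMod 2, v ≠ 0 →
        glOrbit P.toSubgroup v = glOrbit P.toSubgroup v₁ ∨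
        glOrbit P.toSubgroup v = glOrbit P.toSubgroup v₂ ∨
        glOrbit P.toSubgroup v = glOrbit P.toSubgroup v₃) ∧
      (glOrbit P.toSubgroup v₁).ncard = 1 ∧
      (glOrbit P.toSubgroup v₂).ncard = 2 ∧
      (glOrbit P.toSubgroup v₃).ncard = 4 := by
  classical
  have hG : Nat.card (GL (Fin 3) (ZMod 2)) = 168 := by
    rw [Matrix.card_GL_field]; decide
  have hfact : (Nat.card (GL (Fin 3) (ZMod 2))).factorization 2 = 3 := by
    rw [hG]
    have : (168:ℕ) = 2^3 * 21 := by norm_num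
    rw [this, Nat.factorization_mul (by norm_num) (by norm_num),
      Nat.Prime.factorization_pow Nat.prime_two]
    simp [Nat.factorization_eq_zero_iff]
  have P0card : Nat.card P0 = 2 ^ (Nat.card (GL (Fin 3) (ZMod 2))).factorization 2 := by
    rw [card_P0, hfact]; norm_num
  obtain ⟨g, hg⟩ := MulAction.exists_smul_eq (GL (Fin 3) (ZMod 2)) (Sylow.ofCard P0 P0card) P
  have hmem : ∀ x : GL (Fin 3) (ZMod 2), x ∈ P.toSubgroup ↔ g⁻¹ * x * g ∈ P0 := by
    intro x
    rw [← hg]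
    show x ∈ ((g • Sylow.ofCard P0 P0card : Sylow 2 _) : Subgroup _) ↔ _
    rw [Sylow.smul_def, Sylow.pointwise_smul_def,
      Subgroup.mem_pointwise_smul_iff_inv_smul_mem]
    have h1 : (MulAut.conj g)⁻¹ • x = g⁻¹ * x * g := by
      rw [← MulAut.conj_inv_apply]; rfl
    rw [h1]
    rfl
  clear hg hG hfact P0card
  set f : (Fin 3 → ZMod 2) → (Fin 3 → ZMod 2) := fun w => (g : MM) *ᵥ w with hf
  have hlinv : Function.LeftInverse
      (fun w => ((g⁻¹ : GL (Fin 3) (ZMod 2)) : MM) *ᵥ w) f := fun w => GL_cancel' g w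
  have hfinj : Function.Injective f := hlinv.injective
  have hzero : ∀ v : Fin 3 → ZMod 2, f v = 0 → v = 0 := by
    intro v h
    have h2 := GL_cancel' g v
    rw [show (g : MM) *ᵥ v = f v from rfl, h, Matrix.mulVec_zero] at h2
    exact h2.symm
  have key : ∀ v : Fin 3 → ZMod 2,
      glOrbit P.toSubgroup (f v) = f '' glOrbit P0 v := by
    intro v
    ext w
    constructor
    · rintro ⟨h, hh, rfl⟩
      refine ⟨((g⁻¹ * h * g : GL (Fin 3) (ZMod 2)) : MM) *ᵥ v,
        ⟨g⁻¹ * h * g, (hmem h).mp hh, rfl⟩, ?_⟩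
      show (g : MM) *ᵥ (((g⁻¹ * h * g : GL (Fin 3) (ZMod 2)) : MM) *ᵥ v)
        = (h : MM) *ᵥ ((g : MM) *ᵥ v)
      rw [GL_mulVec_mulVec, GL_mulVec_mulVec,
        show g * (g⁻¹ * h * g) = h * g by group]
    · rintro ⟨u, ⟨k, hk, rfl⟩, rfl⟩
      refine ⟨g * k * g⁻¹, ?_, ?_⟩
      · rw [hmem, show g⁻¹ * (g * k * g⁻¹) * g = k by group]
        exact hk
      · show ((g * k * g⁻¹ : GL (Fin 3) (ZMod 2)) : MM) *ᵥ ((g : MM) *ᵥ v)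
          = (g : MM) *ᵥ ((k : MM) *ᵥ v)
        rw [GL_mulVec_mulVec, GL_mulVec_mulVec,
          show g * k * g⁻¹ * g = g * k by group]
  refine ⟨f ![1,0,0], f ![0,1,0], f ![0,0,1], ?_, ?_, ?_, ?_, ?_, ?_, ?_, ?_, ?_, ?_⟩
  · intro h
    exact absurd (hzero _ h) (by decide)
  · intro h
    exact absurd (hzero _ h) (by decide)
  · intro h
    exact absurd (hzero _ h) (by decide)
  · rw [key, key, orbit0, orbit1]
    intro h
    have h2 := Set.image_injective.mpr hfinj h
    have h3 : (![1,0,0] : Fin 3 → ZMod 2) ∈ ({![0,1,0], ![1,1,0]} : Set _) := by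
      rw [← h2]; rfl
    simp only [Set.mem_insert_iff, Set.mem_singleton_iff] at h3
    rcases h3 with h4 | h4 <;> exact absurd h4 (by decide)
  · rw [key, key, orbit0, orbit2]
    intro h
    have h2 := Set.image_injective.mpr hfinj h
    have h3 : (![1,0,0] : Fin 3 → ZMod 2) ∈ ({w : Fin 3 → ZMod 2 | w 2 = 1} : Set _) := by
      rw [← h2]; rfl
    exact absurd h3 (by decide)
  · rw [key, key, orbit1, orbit2]
    intro h
    have h2 := Set.image_injective.mpr hfinj h
    have h3 : (![0,1,0] : Fin 3 → ZMod 2) ∈ ({w : Fin 3 → ZMod 2 | w 2 = 1} : Set _) := by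
      rw [← h2]; exact Set.mem_insert _ _
    exact absurd h3 (by decide)
  · intro v hv
    have hvf : f (((g⁻¹ : GL (Fin 3) (ZMod 2)) : MM) *ᵥ v) = v := GL_cancel g v
    have hv' : ((g⁻¹ : GL (Fin 3) (ZMod 2)) : MM) *ᵥ v ≠ 0 := by
      intro h
      apply hv
      rw [← hvf, h]
      exact Matrix.mulVec_zero _
    rcases P0_cover _ hv' with h | h | h
    · left; rw [← hvf, key, h, ← key]
    · right; left; rw [← hvf, key, h, ← key]
    · right; right; rw [← hvf, key, h, ← key]
  · rw [key, orbit0, Set.ncard_image_of_injective _ hfinj, Set.ncard_singleton]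
  · rw [key, orbit1, Set.ncard_image_of_injective _ hfinj, Set.ncard_pair (by decide)]
  · rw [key, orbit2, Set.ncard_image_of_injective _ hfinj, ncard_orbit2]
end
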